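/- arXiv:math/0510452 — 6 statements merged into one kernel-verified Lean document; each statement's English description precedes it below -/
import Mathlib

section
/- For each n ≥ 1 let F_n be a set of homogeneous polynomials of degree n in n real variables with nonnegative coefficients, and suppose the family satisfies: (a) if p ∈ F_n with n > 1 then p_{x_i} ∈ F_{n−1} for every 1 ≤ i ≤ n, and (b) Cap(p_{x_i}) ≥ g(S_p({i})) · Cap(p) for every p ∈ F_n and 1 ≤ i ≤ n. Then for every p ∈ F_n, ∏_{i=1}^{n} g(min(S_p({i}), n+1−i)) · Cap(p) ≤ (coefficient of the monomial x₁x₂⋯xₙ in p) ≤ Cap(p). -/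
/-- The capacity of a polynomial `p` in `n` variables:
`Cap(p) = inf { p(x) : x_i > 0, ∏ x_i = 1 }`. -/
noncomputable def Cap {n : ℕ} (p : MvPolynomial (Fin n) ℝ) : ℝ :=
  sInf {y : ℝ | ∃ x : Fin n → ℝ, (∀ i, 0 < x i) ∧ (∏ i, x i) = 1 ∧
    MvPolynomial.eval x p = y}

/-- `S_p(A)`: the maximum over exponent vectors `r` in the support of `p`
of `∑_{i ∈ A} r i`. -/
def Sp {n : ℕ} (p : MvPolynomial (Fin n) ℝ) (A : Finset (Fin n)) : ℕ :=
  p.support.sup (fun r => ∑ i ∈ A, r i)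

/-- `g(k) = ((k-1)/k)^(k-1)`, with `g 0 = 1`. -/
noncomputable def g (k : ℕ) : ℝ := (((k : ℝ) - 1) / (k : ℝ)) ^ (k - 1)

/-- The univariate polynomial `t ↦ p(t·e - X)` where `e = (1,…,1)`. -/
noncomputable def univPoly {m : ℕ} (p : MvPolynomial (Fin m) ℝ) (X : Fin m → ℝ) :
    Polynomial ℝ :=
  MvPolynomial.aeval (fun i => (Polynomial.X : Polynomial ℝ) - Polynomial.C (X i)) p

/-- `p` (of degree `n`) is hyperbolic in direction `e = (1,…,1)`:
`p(e) ≠ 0` and for each real `X` the polynomial `t ↦ p(te - X)` has all `n`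
roots real (counting multiplicities). -/
def IsHyperbolic {m : ℕ} (n : ℕ) (p : MvPolynomial (Fin m) ℝ) : Prop :=
  MvPolynomial.eval (fun _ => (1 : ℝ)) p ≠ 0 ∧
    ∀ X : Fin m → ℝ, Multiset.card (univPoly p X).roots = n

/-- `p` (of degree `n`) is POS-hyperbolic: `e`-hyperbolic, `p(e) > 0`, and for
every `X` with nonnegative coordinates all roots of `t ↦ p(te - X)` are
nonnegative. -/
def IsPOSHyperbolic {m : ℕ} (n : ℕ) (p : MvPolynomial (Fin m) ℝ) : Prop :=
  IsHyperbolic n p ∧ 0 < MvPolynomial.eval (fun _ => (1 : ℝ)) p ∧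
    ∀ X : Fin m → ℝ, (∀ i, 0 ≤ X i) → ∀ r ∈ (univPoly p X).roots, (0 : ℝ) ≤ r

/-- `Rank_p(X)`: the number of nonzero roots (with multiplicity) of
`t ↦ p(te - X)`. -/
noncomputable def Rank {m : ℕ} (p : MvPolynomial (Fin m) ℝ) (X : Fin m → ℝ) : ℕ :=
  Multiset.card ((univPoly p X).roots.filter (fun r => r ≠ 0))

/-- The coefficient of the monomial `x₁x₂⋯xₙ` in `p`, which equals
`∂ⁿp/∂x₁⋯∂xₙ(0,…,0)`. -/
noncomputable def coeffOnes {n : ℕ} (p : MvPolynomial (Fin n) ℝ) : ℝ :=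
  p.coeff (Finsupp.equivFunOnFinite.symm (fun _ => (1 : ℕ)))

/-- `p_{x_i}`: the partial derivative `∂p/∂x_i` with `x_i` set to `0`, viewed as a
polynomial in the remaining `n` variables (indexed via `finSuccEquiv' i`). -/
noncomputable def pderivAtZero {n : ℕ} (i : Fin (n + 1))
    (p : MvPolynomial (Fin (n + 1)) ℝ) : MvPolynomial (Fin n) ℝ :=
  MvPolynomial.aeval (fun j => ((finSuccEquiv' i) j).elim 0 MvPolynomial.X)
    (MvPolynomial.pderiv i p)

section Aux

open MvPolynomial

/-! ### Properties of `g` -/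

private lemma g_nonneg (k : ℕ) : 0 ≤ g k := by
  cases k with
  | zero => simp [g]
  | succ m =>
    apply pow_nonneg
    apply div_nonneg _ (by positivity)
    push_cast; linarith

private lemma g_antitone : Antitone g := by
  apply antitone_nat_of_succ_le
  intro k
  cases k with
  | zero => simp [g]
  | succ m =>
    have hm : (0:ℝ) ≤ (m:ℝ) := Nat.cast_nonneg m
    have h1 : ((m:ℝ) + 1) ≠ 0 := by positivity
    have h2 : ((m:ℝ) + 2) ≠ 0 := by positivity
    have hgk : g (m+1) = ((m:ℝ)/((m:ℝ)+1)) ^ m := by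
      simp only [g]; push_cast; ring_nf
    have hgk1 : g (m+2) = (((m:ℝ)+1)/((m:ℝ)+2)) ^ (m+1) := by
      simp only [g]; push_cast; ring_nf
    rw [hgk, hgk1]
    set R : ℝ := (((m:ℝ)+2)/((m:ℝ)+1)) ^ (m+1) with hR
    have hRpos : 0 < R := by positivity
    have hBR : (((m:ℝ)+1)/((m:ℝ)+2)) ^ (m+1) * R = 1 := by
      rw [hR, ← mul_pow]
      field_simp
      exact one_pow _
    have hAR : 1 ≤ ((m:ℝ)/((m:ℝ)+1)) ^ m * R := by
      have hid : ((1 : ℝ) + (-(1/((m:ℝ)+1)^2)))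
          = ((m:ℝ)/((m:ℝ)+1)) * (((m:ℝ)+2)/((m:ℝ)+1)) := by
        field_simp; ring
      have hsplit : ((m:ℝ)/((m:ℝ)+1)) ^ m * R
          = ((1 : ℝ) + (-(1/((m:ℝ)+1)^2))) ^ m * (((m:ℝ)+2)/((m:ℝ)+1)) := by
        rw [hid, mul_pow, hR, pow_succ]; ring
      rw [hsplit]
      have hbern : 1 + (m:ℝ) * (-(1/((m:ℝ)+1)^2)) ≤ ((1:ℝ) + (-(1/((m:ℝ)+1)^2))) ^ m := by
        apply one_add_mul_le_pow
        have : (1:ℝ)/((m:ℝ)+1)^2 ≤ 1 := by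
          rw [div_le_one (by positivity)]; nlinarith
        linarith
      have hfact : (1 + (m:ℝ) * (-(1/((m:ℝ)+1)^2))) * (((m:ℝ)+2)/((m:ℝ)+1))
          = 1 + 1/((m:ℝ)+1)^3 := by
        field_simp
        ring
      have hpos3 : (0:ℝ) < 1/((m:ℝ)+1)^3 := by positivity
      calc (1:ℝ) ≤ 1 + 1/((m:ℝ)+1)^3 := by linarith
        _ = (1 + (m:ℝ) * (-(1/((m:ℝ)+1)^2))) * (((m:ℝ)+2)/((m:ℝ)+1)) := hfact.symm
        _ ≤ ((1:ℝ) + (-(1/((m:ℝ)+1)^2))) ^ m * (((m:ℝ)+2)/((m:ℝ)+1)) := by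
            apply mul_le_mul_of_nonneg_right hbern (by positivity)
    have hB : (((m:ℝ)+1)/((m:ℝ)+2)) ^ (m+1) = 1 / R :=
      eq_one_div_of_mul_eq_one_left hBR
    rw [hB, div_le_iff₀ hRpos]
    linarith [hAR]

/-! ### Properties of `Cap` -/

private lemma eval_nonneg' {n : ℕ} (p : MvPolynomial (Fin n) ℝ)
    (hc : ∀ r, 0 ≤ p.coeff r) (x : Fin n → ℝ) (hx : ∀ i, 0 ≤ x i) :
    0 ≤ MvPolynomial.eval x p := by
  rw [MvPolynomial.eval_eq']
  apply Finset.sum_nonneg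
  intro m _
  exact mul_nonneg (hc m) (Finset.prod_nonneg fun i _ => pow_nonneg (hx i) _)

private lemma coeffOnes_le_eval {n : ℕ} (p : MvPolynomial (Fin n) ℝ)
    (hc : ∀ r, 0 ≤ p.coeff r) (x : Fin n → ℝ) (hx : ∀ i, 0 < x i)
    (hprod : ∏ i, x i = 1) : coeffOnes p ≤ MvPolynomial.eval x p := by
  rw [MvPolynomial.eval_eq']
  set e : Fin n →₀ ℕ := Finsupp.equivFunOnFinite.symm (fun _ => (1 : ℕ)) with he
  by_cases hmem : e ∈ p.support
  · have h1 : coeffOnes p = p.coeff e * ∏ i, x i ^ e i := by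
      have : ∀ i, e i = 1 := fun i => rfl
      simp [coeffOnes, this, hprod]
      rfl
    rw [h1]
    exact Finset.single_le_sum
      (fun m _ => mul_nonneg (hc m) (Finset.prod_nonneg fun i _ => pow_nonneg (hx i).le _))
      hmem
  · have : coeffOnes p = 0 := by
      rw [coeffOnes, ← he, MvPolynomial.notMem_support_iff.mp hmem]
    rw [this]
    apply Finset.sum_nonneg
    intro m _
    exact mul_nonneg (hc m) (Finset.prod_nonneg fun i _ => pow_nonneg (hx i).le _)

private lemma capSet_nonempty {n : ℕ} (p : MvPolynomial (Fin n) ℝ) :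
    {y : ℝ | ∃ x : Fin n → ℝ, (∀ i, 0 < x i) ∧ (∏ i, x i) = 1 ∧
      MvPolynomial.eval x p = y}.Nonempty :=
  ⟨MvPolynomial.eval (fun _ => 1) p, fun _ => 1, fun _ => one_pos, by simp, rfl⟩

private lemma coeffOnes_le_cap {n : ℕ} (p : MvPolynomial (Fin n) ℝ)
    (hc : ∀ r, 0 ≤ p.coeff r) : coeffOnes p ≤ Cap p := by
  apply le_csInf (capSet_nonempty p)
  rintro y ⟨x, hx, hprod, rfl⟩
  exact coeffOnes_le_eval p hc x hx hprod

private lemma cap_nonneg {n : ℕ} (p : MvPolynomial (Fin n) ℝ)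
    (hc : ∀ r, 0 ≤ p.coeff r) : 0 ≤ Cap p := by
  apply le_csInf (capSet_nonempty p)
  rintro y ⟨x, hx, hprod, rfl⟩
  exact eval_nonneg' p hc x (fun i => (hx i).le)

private lemma cap_le_eval {n : ℕ} (p : MvPolynomial (Fin n) ℝ)
    (hc : ∀ r, 0 ≤ p.coeff r) (x : Fin n → ℝ) (hx : ∀ i, 0 < x i)
    (hprod : ∏ i, x i = 1) : Cap p ≤ MvPolynomial.eval x p := by
  apply csInf_le
  · refine ⟨0, ?_⟩
    rintro y ⟨x', hx', hprod', rfl⟩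
    exact eval_nonneg' p hc x' (fun i => (hx' i).le)
  · exact ⟨x, hx, hprod, rfl⟩

/-! ### Coefficients of `pderiv` and `pderivAtZero` -/

private lemma coeff_pderiv' {n : ℕ} (i : Fin n) (p : MvPolynomial (Fin n) ℝ)
    (m : Fin n →₀ ℕ) :
    (MvPolynomial.pderiv i p).coeff m
      = ((m i : ℝ) + 1) * p.coeff (m + Finsupp.single i 1) := by
  conv_lhs => rw [p.as_sum, map_sum, MvPolynomial.coeff_sum]
  rw [Finset.sum_eq_single (m + Finsupp.single i 1)]
  · rw [pderiv_monomial, add_tsub_cancel_right, coeff_monomial, if_pos rfl]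
    have h2 : ((m + Finsupp.single i 1 : Fin n →₀ ℕ)) i = m i + 1 := by
      rw [Finsupp.add_apply, Finsupp.single_eq_same]
    rw [h2]
    push_cast
    ring
  · intro s hs hne
    rw [pderiv_monomial, coeff_monomial]
    split_ifs with h
    · rcases Nat.eq_zero_or_pos (s i) with h0 | h0
      · simp [h0]
      · exfalso
        apply hne
        have hle : Finsupp.single i 1 ≤ s := by
          rw [Finsupp.single_le_iff]; omega
        rw [← h, tsub_add_cancel_of_le hle]
    · rfl
  · intro h
    rw [MvPolynomial.notMem_support_iff] at h
    rw [h, pderiv_monomial, coeff_monomial]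
    split_ifs <;> simp

private lemma pderivAtZero_as_sum {n : ℕ} (i : Fin (n + 1))
    (p : MvPolynomial (Fin (n + 1)) ℝ) :
    pderivAtZero i p = ∑ m ∈ (MvPolynomial.pderiv i p).support,
      MvPolynomial.C ((MvPolynomial.pderiv i p).coeff m) *
        ((0 : MvPolynomial (Fin n) ℝ) ^ (m i) *
          MvPolynomial.monomial
            (Finsupp.equivFunOnFinite.symm (fun k => m (i.succAbove k))) 1) := by
  rw [pderivAtZero, MvPolynomial.aeval_def, MvPolynomial.eval₂_eq']
  refine Finset.sum_congr rfl fun m _ => ?_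
  congr 1
  rw [Fin.prod_univ_succAbove _ i]
  congr 1
  · rw [finSuccEquiv'_at]
    rfl
  · set e : Fin n →₀ ℕ := Finsupp.equivFunOnFinite.symm (fun k => m (i.succAbove k)) with he
    have h1 : ∀ k : Fin n, ((finSuccEquiv' i) (i.succAbove k)).elim
        (0 : MvPolynomial (Fin n) ℝ) MvPolynomial.X ^ m (i.succAbove k)
        = MvPolynomial.X k ^ e k := by
      intro k
      rw [finSuccEquiv'_succAbove]
      rfl
    rw [Finset.prod_congr rfl (fun k _ => h1 k)]
    rw [← MvPolynomial.prod_X_pow_eq_monomial]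
    symm
    apply Finset.prod_subset (Finset.subset_univ _)
    intro k _ hk
    rw [Finsupp.notMem_support_iff.mp hk, pow_zero]

private lemma equivFun_apply {n : ℕ} (f : Fin n → ℕ) (j : Fin n) :
    (Finsupp.equivFunOnFinite.symm f) j = f j := rfl

private lemma coeffOnes_pderivAtZero {n : ℕ} (i : Fin (n + 1))
    (p : MvPolynomial (Fin (n + 1)) ℝ) :
    coeffOnes (pderivAtZero i p) = coeffOnes p := by
  classical
  set q := MvPolynomial.pderiv i p with hq
  set e : Fin (n + 1) →₀ ℕ :=
    Finsupp.equivFunOnFinite.symm (fun j => if j = i then 0 else 1) with he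
  have hei : e i = 0 := by rw [he, equivFun_apply, if_pos rfl]
  have heo : ∀ k : Fin n, e (i.succAbove k) = 1 := by
    intro k
    rw [he, equivFun_apply, if_neg (Fin.succAbove_ne i k)]
  have hterm : ∀ m : Fin (n + 1) →₀ ℕ,
      MvPolynomial.coeff (Finsupp.equivFunOnFinite.symm (fun _ => (1 : ℕ)))
        (MvPolynomial.C (q.coeff m) *
          ((0 : MvPolynomial (Fin n) ℝ) ^ (m i) *
            MvPolynomial.monomial
              (Finsupp.equivFunOnFinite.symm (fun k => m (i.succAbove k))) 1))
      = if m i = 0 ∧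
          Finsupp.equivFunOnFinite.symm (fun k => m (i.succAbove k))
            = Finsupp.equivFunOnFinite.symm (fun _ => (1:ℕ))
        then q.coeff m else 0 := by
    intro m
    by_cases h0 : m i = 0
    · rw [h0, pow_zero, one_mul, MvPolynomial.C_mul_monomial, mul_one,
        MvPolynomial.coeff_monomial]
      by_cases h1 : Finsupp.equivFunOnFinite.symm (fun k => m (i.succAbove k))
          = Finsupp.equivFunOnFinite.symm (fun _ => (1:ℕ))
      · rw [if_pos h1, if_pos ⟨rfl, h1⟩]
      · rw [if_neg h1, if_neg (by tauto)]
    · rw [zero_pow h0, zero_mul, mul_zero, MvPolynomial.coeff_zero,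
        if_neg (by tauto)]
  rw [coeffOnes, pderivAtZero_as_sum, MvPolynomial.coeff_sum]
  rw [Finset.sum_congr rfl (fun m _ => hterm m)]
  rw [Finset.sum_eq_single e]
  · rw [if_pos ⟨hei, by
      congr 1
      funext k
      exact heo k⟩]
    rw [hq, coeff_pderiv', hei, coeffOnes]
    have hsum : e + Finsupp.single i 1 = Finsupp.equivFunOnFinite.symm (fun _ => (1:ℕ)) := by
      ext j
      by_cases hj : j = i
      · subst hj
        simp [Finsupp.add_apply, he, equivFun_apply]
      · simp [Finsupp.add_apply, he, equivFun_apply, hj,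
          Finsupp.single_eq_of_ne (Ne.symm hj)]
    rw [hsum]
    norm_num
  · intro m _ hme
    rw [if_neg]
    rintro ⟨h0, h1⟩
    apply hme
    ext j
    by_cases hj : j = i
    · subst hj; rw [h0, hei]
    · obtain ⟨k, rfl⟩ := Fin.exists_succAbove_eq (show j ≠ i from hj)
      have h1' := congrFun (congrArg (fun f : Fin n →₀ ℕ => (f : Fin n → ℕ)) h1) k
      simp only [equivFun_apply] at h1'
      rw [h1', heo k]
  · intro hnot
    have hz : q.coeff e = 0 := MvPolynomial.notMem_support_iff.mp hnot
    rw [hz]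
    split_ifs <;> rfl

private lemma support_pderivAtZero {n : ℕ} (i : Fin (n + 1))
    (p : MvPolynomial (Fin (n + 1)) ℝ)
    (m' : Fin n →₀ ℕ) (hm' : m' ∈ (pderivAtZero i p).support) :
    ∃ M ∈ p.support, ∀ k, m' k ≤ M (i.succAbove k) := by
  classical
  set q := MvPolynomial.pderiv i p with hq
  have hne : (pderivAtZero i p).coeff m' ≠ 0 := MvPolynomial.mem_support_iff.mp hm'
  rw [pderivAtZero_as_sum, MvPolynomial.coeff_sum] at hne
  obtain ⟨m, hm, hcoeff⟩ := Finset.exists_ne_zero_of_sum_ne_zero hne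
  by_cases h0 : m i = 0
  swap
  · exfalso; apply hcoeff
    rw [zero_pow h0, zero_mul, mul_zero, MvPolynomial.coeff_zero]
  rw [h0, pow_zero, one_mul, MvPolynomial.C_mul_monomial, mul_one,
    MvPolynomial.coeff_monomial] at hcoeff
  by_cases h1 : Finsupp.equivFunOnFinite.symm (fun k => m (i.succAbove k)) = m'
  swap
  · exfalso; apply hcoeff; rw [if_neg h1]
  refine ⟨m + Finsupp.single i 1, ?_, ?_⟩
  · rw [MvPolynomial.mem_support_iff]
    intro hz
    have := coeff_pderiv' i p m
    rw [hz, mul_zero] at this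
    exact (MvPolynomial.mem_support_iff.mp hm) this
  · intro k
    have : m' k = m (i.succAbove k) := by
      rw [← h1]; rfl
    rw [this, Finsupp.add_apply]
    exact Nat.le_add_right _ _

/-! ### Properties of `Sp` -/

private lemma Sp_singleton {n : ℕ} (p : MvPolynomial (Fin n) ℝ) (i : Fin n) :
    Sp p {i} = p.support.sup (fun r => r i) := by
  unfold Sp
  congr 1

private lemma Sp_le_degree {n d : ℕ} (p : MvPolynomial (Fin n) ℝ)
    (hp : p.IsHomogeneous d) (i : Fin n) : Sp p {i} ≤ d := by
  rw [Sp_singleton]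
  apply Finset.sup_le
  intro m hm
  have hdeg := hp (MvPolynomial.mem_support_iff.mp hm)
  have := Finsupp.le_weight (1 : Fin n → ℕ) (s := i) one_ne_zero m
  omega

/-! ### Base case -/

private lemma eval_ones_eq_coeffOnes {p : MvPolynomial (Fin 1) ℝ}
    (hp : p.IsHomogeneous 1) :
    MvPolynomial.eval (fun _ => (1:ℝ)) p = coeffOnes p := by
  classical
  set e : Fin 1 →₀ ℕ := Finsupp.equivFunOnFinite.symm (fun _ => (1 : ℕ)) with he
  have hsub : p.support ⊆ {e} := by
    intro m hm
    have hdeg := hp (MvPolynomial.mem_support_iff.mp hm)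
    rw [Finsupp.weight_apply] at hdeg
    have hsum : (Finsupp.sum m fun i c => c • (1 : Fin 1 → ℕ) i) = m 0 := by
      rw [Finsupp.sum]
      have : m.support ⊆ {0} := by
        intro j _; simp [Subsingleton.elim j 0]
      rcases Finset.subset_singleton_iff.mp this with h | h
      · simp [Finsupp.support_eq_empty.mp h]
      · simp [h]
    rw [hsum] at hdeg
    have : m = e := by
      apply Finsupp.ext
      intro j
      rw [Subsingleton.elim j 0, hdeg]; rfl
    simp [this]
  rw [MvPolynomial.eval_eq']
  have := Finset.sum_subset hsub (f := fun m => p.coeff m * ∏ j, (1:ℝ) ^ m j)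
    (fun x _ hx => by simp [MvPolynomial.notMem_support_iff.mp hx])
  rw [this, Finset.sum_singleton]
  simp [coeffOnes, he]

/-! ### Main induction -/

private lemma main_lower
    (F : ∀ n : ℕ, Set (MvPolynomial (Fin n) ℝ))
    (hhom : ∀ n, ∀ p ∈ F n, MvPolynomial.IsHomogeneous p n)
    (hnn : ∀ n, ∀ p ∈ F n, ∀ r, 0 ≤ MvPolynomial.coeff r p)
    (ha : ∀ n, ∀ p ∈ F (n + 2), ∀ i : Fin (n + 2), pderivAtZero i p ∈ F (n + 1))
    (hb : ∀ n, ∀ p ∈ F (n + 1), ∀ i : Fin (n + 1),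
      g (Sp p {i}) * Cap p ≤ Cap (pderivAtZero i p)) :
    ∀ n : ℕ, ∀ p ∈ F (n + 1),
      (∏ i : Fin (n + 1), g (min (Sp p {i}) (n + 1 - (i : ℕ)))) * Cap p ≤ coeffOnes p := by
  intro n
  induction n with
  | zero =>
    intro p hp
    have hprod : (∏ i : Fin 1, g (min (Sp p {i}) (0 + 1 - (i : ℕ)))) = 1 := by
      rw [Fin.prod_univ_one]
      have hle : min (Sp p {(0 : Fin 1)}) (0 + 1 - ((0 : Fin 1) : ℕ)) ≤ 1 := by
        refine le_trans (min_le_right _ _) ?_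
        norm_num
      interval_cases h : (min (Sp p {(0 : Fin 1)}) (0 + 1 - ((0 : Fin 1) : ℕ)))
      · simp [g]
      · simp [g]
    rw [hprod, one_mul]
    have h1 := cap_le_eval p (hnn 1 p hp) (fun _ => 1) (fun _ => one_pos) (by simp)
    rwa [eval_ones_eq_coeffOnes (hhom 1 p hp)] at h1
  | succ n ih =>
    intro p hp
    have hph : p.IsHomogeneous (n+2) := hhom (n+2) p hp
    have hpnn := hnn (n+2) p hp
    set p' := pderivAtZero (0 : Fin (n+2)) p with hp'def
    have hp' : p' ∈ F (n+1) := ha n p hp 0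
    have hIH := ih p' hp'
    have hcap' : g (Sp p {0}) * Cap p ≤ Cap p' := hb (n+1) p hp 0
    have hcapnn : 0 ≤ Cap p := cap_nonneg p hpnn
    have hco : coeffOnes p' = coeffOnes p := coeffOnes_pderivAtZero 0 p
    have hSp' : ∀ j : Fin (n+1), Sp p' {j} ≤ Sp p {j.succ} := by
      intro j
      rw [Sp_singleton, Sp_singleton]
      apply Finset.sup_le
      intro m' hm'
      obtain ⟨M, hM, hMk⟩ := support_pderivAtZero 0 p m' hm'
      calc m' j ≤ M ((0 : Fin (n+2)).succAbove j) := hMk j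
        _ = M j.succ := by rw [Fin.zero_succAbove]
        _ ≤ p.support.sup (fun r => r j.succ) := Finset.le_sup (f := fun r => r j.succ) hM
    have hfac : ∀ j : Fin (n+1),
        g (min (Sp p {j.succ}) (n + 1 + 1 - ((j.succ : Fin (n+2)) : ℕ)))
          ≤ g (min (Sp p' {j}) (n + 1 - (j : ℕ))) := by
      intro j
      apply g_antitone
      have hval : ((j.succ : Fin (n+2)) : ℕ) = (j : ℕ) + 1 := rfl
      rw [hval]
      have h2 : n + 1 + 1 - ((j : ℕ) + 1) = n + 1 - (j : ℕ) := by omega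
      rw [h2]
      exact min_le_min (hSp' j) le_rfl
    have hsplit : (∏ i : Fin (n+2), g (min (Sp p {i}) (n + 1 + 1 - (i : ℕ))))
        = g (min (Sp p {0}) (n+2)) *
          ∏ j : Fin (n+1), g (min (Sp p {j.succ}) (n + 1 + 1 - ((j.succ : Fin (n+2)) : ℕ))) := by
      rw [Fin.prod_univ_succ]
      norm_num
    have hmin0 : min (Sp p {(0 : Fin (n+2))}) (n+2) = Sp p {(0 : Fin (n+2))} :=
      min_eq_left (Sp_le_degree p hph 0)
    have hprodle :
        (∏ j : Fin (n+1), g (min (Sp p {j.succ}) (n + 1 + 1 - ((j.succ : Fin (n+2)) : ℕ))))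
          ≤ ∏ j : Fin (n+1), g (min (Sp p' {j}) (n + 1 - (j : ℕ))) :=
      Finset.prod_le_prod (fun j _ => g_nonneg _) (fun j _ => hfac j)
    set G := ∏ j : Fin (n+1), g (min (Sp p' {j}) (n + 1 - (j : ℕ))) with hG
    have hGnn : 0 ≤ G := Finset.prod_nonneg fun j _ => g_nonneg _
    calc (∏ i : Fin (n+2), g (min (Sp p {i}) (n + 1 + 1 - (i : ℕ)))) * Cap p
        = g (Sp p {0}) *
            (∏ j : Fin (n+1), g (min (Sp p {j.succ}) (n + 1 + 1 - ((j.succ : Fin (n+2)) : ℕ))))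
            * Cap p := by rw [hsplit, hmin0]
      _ ≤ g (Sp p {0}) * G * Cap p := by
          apply mul_le_mul_of_nonneg_right _ hcapnn
          exact mul_le_mul_of_nonneg_left hprodle (g_nonneg _)
      _ = G * (g (Sp p {0}) * Cap p) := by ring
      _ ≤ G * Cap p' := mul_le_mul_of_nonneg_left hcap' hGnn
      _ ≤ coeffOnes p' := hIH
      _ = coeffOnes p := hco

end Aux

/-- The main (meta)theorem for VDW-families. If each `F n` consists
of homogeneous polynomials of degree `n` in `n` variables with nonnegative
coefficients, closed under `p ↦ p_{x_i}` (for `n > 1`), and satisfying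
`Cap(p_{x_i}) ≥ g(S_p({i})) · Cap(p)`, then every `p ∈ F n` satisfies
`∏_{i=1}^{n} g(min(S_p({i}), n+1-i)) · Cap(p) ≤ ∂ⁿp/∂x₁⋯∂xₙ(0) ≤ Cap(p)`. -/
theorem vdw_family_main_inequality
    (F : ∀ n : ℕ, Set (MvPolynomial (Fin n) ℝ))
    (hhom : ∀ n, ∀ p ∈ F n, MvPolynomial.IsHomogeneous p n)
    (hnn : ∀ n, ∀ p ∈ F n, ∀ r, 0 ≤ MvPolynomial.coeff r p)
    (ha : ∀ n, ∀ p ∈ F (n + 2), ∀ i : Fin (n + 2), pderivAtZero i p ∈ F (n + 1))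
    (hb : ∀ n, ∀ p ∈ F (n + 1), ∀ i : Fin (n + 1),
      g (Sp p {i}) * Cap p ≤ Cap (pderivAtZero i p))
    (n : ℕ) (hn : 1 ≤ n) (p : MvPolynomial (Fin n) ℝ) (hp : p ∈ F n) :
    (∏ i : Fin n, g (min (Sp p {i}) (n - (i : ℕ)))) * Cap p ≤ coeffOnes p ∧
      coeffOnes p ≤ Cap p := by
  obtain ⟨m, rfl⟩ : ∃ m, n = m + 1 := ⟨n - 1, by omega⟩
  exact ⟨main_lower F hhom hnn ha hb m p hp, coeffOnes_le_cap p (hnn _ p hp)⟩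
end

section
/- Let c₁,...,cₙ be real numbers with 0 ≤ cᵢ ≤ 1 for all i and Σᵢ₌₁ⁿ cᵢ = n−1. Let Sₙ = ∏ᵢ₌₁ⁿ cᵢ and Sₙ₋₁ = Σᵢ₌₁ⁿ ∏_{j≠i} cⱼ. Then Sₙ₋₁ − n·Sₙ ≥ exp(Σᵢ₌₁ⁿ cᵢ log cᵢ), with the convention 0·log 0 = 0. -/
/-- Entropic inequality. If `0 ≤ cᵢ ≤ 1` and `∑ cᵢ = n - 1`, then
`Sₙ₋₁ - n·Sₙ ≥ exp(∑ cᵢ log cᵢ)`, where `Sₙ = ∏ cᵢ` and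
`Sₙ₋₁ = ∑ᵢ ∏_{j≠i} cⱼ`. (The convention `0·log 0 = 0` holds automatically
since `Real.log 0 = 0`.) -/
theorem entropic_inequality (n : ℕ) (c : Fin n → ℝ)
    (h0 : ∀ i, 0 ≤ c i) (h1 : ∀ i, c i ≤ 1)
    (hsum : ∑ i, c i = (n : ℝ) - 1) :
    Real.exp (∑ i, c i * Real.log (c i)) ≤
      (∑ i, ∏ j ∈ Finset.univ.erase i, c j) - (n : ℝ) * ∏ i, c i := by
  classical
  have key : (∑ i, ∏ j ∈ Finset.univ.erase i, c j) - (n : ℝ) * ∏ i, c i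
      = ∑ i, (1 - c i) * ∏ j ∈ Finset.univ.erase i, c j := by
    have h2 : ∀ i : Fin n, c i * ∏ j ∈ Finset.univ.erase i, c j = ∏ j, c j := by
      intro i
      exact Finset.mul_prod_erase Finset.univ c (Finset.mem_univ i)
    simp only [sub_mul, one_mul, Finset.sum_sub_distrib, h2, Finset.sum_const,
      Finset.card_univ, Fintype.card_fin, nsmul_eq_mul]
  rw [key]
  by_cases hpos : ∀ i, 0 < c i
  · -- all positive: weighted AM-GM
    have hw : ∀ i ∈ Finset.univ, (0:ℝ) ≤ 1 - c i := fun i _ => by linarith [h1 i]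
    have hw' : ∑ i : Fin n, (1 - c i) = 1 := by
      rw [Finset.sum_sub_distrib, hsum]
      simp
    have hz : ∀ i ∈ Finset.univ, (0:ℝ) ≤ ∏ j ∈ Finset.univ.erase i, c j :=
      fun i _ => Finset.prod_nonneg fun j _ => h0 j
    have amgm := Real.geom_mean_le_arith_mean_weighted Finset.univ
      (fun i => 1 - c i) (fun i => ∏ j ∈ Finset.univ.erase i, c j) hw hw' hz
    refine le_trans (le_of_eq ?_) amgm
    have hzpos : ∀ i : Fin n, 0 < ∏ j ∈ Finset.univ.erase i, c j :=
      fun i => Finset.prod_pos fun j _ => hpos j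
    have hrw : ∀ i : Fin n, (∏ j ∈ Finset.univ.erase i, c j) ^ (1 - c i)
        = Real.exp ((1 - c i) * Real.log (∏ j ∈ Finset.univ.erase i, c j)) := by
      intro i
      rw [Real.rpow_def_of_pos (hzpos i), mul_comm]
    rw [Finset.prod_congr rfl (fun i _ => hrw i), ← Real.exp_sum]
    congr 1
    have hlog : ∀ i : Fin n, Real.log (∏ j ∈ Finset.univ.erase i, c j)
        = (∑ j, Real.log (c j)) - Real.log (c i) := by
      intro i
      rw [Real.log_prod (fun j _ => (hpos j).ne')]
      have := Finset.add_sum_erase Finset.univ (fun j => Real.log (c j))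
        (Finset.mem_univ i)
      linarith [this]
    set L := ∑ j, Real.log (c j) with hL
    have expand : ∀ i : Fin n, (1 - c i) * (L - Real.log (c i))
        = L - Real.log (c i) - c i * L + c i * Real.log (c i) := fun i => by ring
    have hstep : ∑ i, (1 - c i) * (L - Real.log (c i)) = ∑ i, c i * Real.log (c i) := by
      rw [Finset.sum_congr rfl fun i _ => expand i, Finset.sum_add_distrib,
        Finset.sum_sub_distrib, Finset.sum_sub_distrib, Finset.sum_const,
        ← Finset.sum_mul, hsum, ← hL, Finset.card_univ, Fintype.card_fin,
        nsmul_eq_mul]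
      ring
    rw [← hstep]
    exact Finset.sum_congr rfl fun i _ => by rw [hlog i]
  · -- some c j = 0 : then all other c i = 1
    push_neg at hpos
    obtain ⟨j, hj⟩ := hpos
    have hj0 : c j = 0 := le_antisymm hj (h0 j)
    have hrest : ∀ i, i ≠ j → c i = 1 := by
      intro i hij
      by_contra hne
      have hlt : c i < 1 := lt_of_le_of_ne (h1 i) hne
      have h2 : ∑ k, c k < (n : ℝ) - 1 := by
        have hle : ∀ k ∈ Finset.univ.erase j, c k ≤ 1 := fun k _ => h1 k
        have : ∑ k ∈ Finset.univ.erase j, c k < ∑ k ∈ Finset.univ.erase j, (1:ℝ) := by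
          apply Finset.sum_lt_sum hle
          exact ⟨i, Finset.mem_erase.2 ⟨hij, Finset.mem_univ i⟩, hlt⟩
        have hcard : (Finset.univ.erase j).card = n - 1 := by
          rw [Finset.card_erase_of_mem (Finset.mem_univ j), Finset.card_univ,
            Fintype.card_fin]
        have hn : 1 ≤ n := Fin.pos j
        rw [← Finset.add_sum_erase Finset.univ c (Finset.mem_univ j), hj0, zero_add]
        calc ∑ k ∈ Finset.univ.erase j, c k < ∑ k ∈ Finset.univ.erase j, (1:ℝ) := this
          _ = (n : ℝ) - 1 := by
              rw [Finset.sum_const, hcard, nsmul_eq_mul, mul_one]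
              push_cast [hn]
              ring
      exact absurd hsum (ne_of_lt h2)
    have hlogsum : ∑ i, c i * Real.log (c i) = 0 := by
      apply Finset.sum_eq_zero
      intro i _
      by_cases hij : i = j
      · rw [hij, hj0]; simp
      · rw [hrest i hij]; simp
    rw [hlogsum, Real.exp_zero]
    have hsum1 : ∑ i, (1 - c i) * ∏ k ∈ Finset.univ.erase i, c k = 1 := by
      rw [← Finset.add_sum_erase Finset.univ _ (Finset.mem_univ j)]
      have ht1 : (1 - c j) * ∏ k ∈ Finset.univ.erase j, c k = 1 := by
        rw [hj0, sub_zero, one_mul]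
        apply Finset.prod_eq_one
        intro k hk
        exact hrest k (Finset.mem_erase.1 hk).1
      have ht2 : ∑ i ∈ Finset.univ.erase j, (1 - c i) * ∏ k ∈ Finset.univ.erase i, c k = 0 := by
        apply Finset.sum_eq_zero
        intro i hi
        rw [hrest i (Finset.mem_erase.1 hi).1]
        simp
      rw [ht1, ht2, add_zero]
    rw [hsum1]
end

section
/- Let n ≥ 2 and let a = (a₁,...,aₙ) satisfy aᵢ ≥ 0 and Σᵢ₌₁ⁿ aᵢ = 1. Let b = (b₁,...,bₙ) with bᵢ = (1 − aᵢ)/(n−1), and let A be the n×n doubly stochastic matrix whose first column is a and whose remaining n−1 columns all equal b. Then per(A) ≥ n!/nⁿ. -/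
/-- The permanent of an `n × n` real matrix:
`per(A) = ∑_{σ ∈ Sₙ} ∏ᵢ A(i, σ(i))`. -/
noncomputable def perm {n : ℕ} (A : Matrix (Fin n) (Fin n) ℝ) : ℝ :=
  ∑ σ : Equiv.Perm (Fin n), ∏ i, A i (σ i)

open Finset

noncomputable def hf {n : ℕ} (a : Fin n → ℝ) : ℝ :=
  ∑ k, a k * ∏ l ∈ Finset.univ.erase k, (1 - a l)

lemma hf_cont {n : ℕ} : Continuous (hf (n := n)) := by
  apply continuous_finset_sum
  intro k _
  exact (continuous_apply k).mul <| continuous_finset_prod _ fun l _ =>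
    continuous_const.sub (continuous_apply l)

lemma hf_decomp {n : ℕ} (a : Fin n → ℝ) (i j : Fin n) (hij : i ≠ j) :
    hf a = (∏ l ∈ (Finset.univ.erase i).erase j, (1 - a l)) * (a i + a j - 2 * (a i * a j))
      + (1 - (a i + a j) + a i * a j) *
        (∑ k ∈ (Finset.univ.erase i).erase j, a k * ∏ l ∈ ((Finset.univ.erase i).erase j).erase k, (1 - a l)) := by
  classical
  set s := (Finset.univ.erase i).erase j with hs
  have hjs : j ∉ s := fun h => (Finset.mem_erase.1 h).1 rfl
  have his : i ∉ s := fun h => (Finset.mem_erase.1 (Finset.mem_erase.1 h).2).1 rfl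
  have h1 : Finset.univ.erase i = insert j s := by
    ext x
    simp only [hs, Finset.mem_erase, Finset.mem_insert, Finset.mem_univ, and_true]
    constructor
    · intro hx; rcases eq_or_ne x j with h | h
      · exact Or.inl h
      · exact Or.inr ⟨h, hx⟩
    · rintro (rfl | ⟨_, hx⟩)
      · exact fun h => hij h.symm
      · exact hx
  have h2 : Finset.univ.erase j = insert i s := by
    ext x
    simp only [hs, Finset.mem_erase, Finset.mem_insert, Finset.mem_univ, and_true]
    constructor
    · intro hx; rcases eq_or_ne x i with h | h
      · exact Or.inl h
      · exact Or.inr ⟨hx, h⟩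
    · rintro (rfl | ⟨hx, _⟩)
      · exact hij
      · exact hx
  have h3 : ∀ k ∈ s, Finset.univ.erase k = insert i (insert j (s.erase k)) := by
    intro k hk
    have hki : k ≠ i := (Finset.mem_erase.1 (Finset.mem_erase.1 hk).2).1
    have hkj : k ≠ j := (Finset.mem_erase.1 hk).1
    ext x
    simp only [hs, Finset.mem_erase, Finset.mem_insert, Finset.mem_univ, and_true]
    constructor
    · intro hx
      rcases eq_or_ne x i with h | h
      · exact Or.inl h
      rcases eq_or_ne x j with h' | h'
      · exact Or.inr (Or.inl h')
      · exact Or.inr (Or.inr ⟨hx, h', h⟩)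
    · rintro (rfl | rfl | ⟨hx, _, _⟩)
      · exact fun h => hki h.symm
      · exact fun h => hkj h.symm
      · exact hx
  have sum1 : hf a = a i * ∏ l ∈ Finset.univ.erase i, (1 - a l)
      + a j * ∏ l ∈ Finset.univ.erase j, (1 - a l)
      + ∑ k ∈ s, a k * ∏ l ∈ Finset.univ.erase k, (1 - a l) := by
    rw [hf, ← Finset.add_sum_erase _ _ (Finset.mem_univ i),
      ← Finset.add_sum_erase _ _ (Finset.mem_erase.2 ⟨fun h => hij h.symm, Finset.mem_univ j⟩)]
    ring
  rw [sum1, h1, h2, Finset.prod_insert hjs, Finset.prod_insert his]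
  have h4 : ∀ k ∈ s, a k * ∏ l ∈ Finset.univ.erase k, (1 - a l)
      = (1 - a i) * (1 - a j) * (a k * ∏ l ∈ s.erase k, (1 - a l)) := by
    intro k hk
    rw [h3 k hk, Finset.prod_insert, Finset.prod_insert]
    · ring
    · exact fun h => hjs (Finset.mem_of_mem_erase h)
    · intro h
      rcases Finset.mem_insert.1 h with h | h
      · exact hij h
      · exact his (Finset.mem_of_mem_erase h)
  rw [Finset.sum_congr rfl h4, ← Finset.mul_sum]
  ring

lemma smooth {n : ℕ} (a : Fin n → ℝ) (ha : ∀ i, 0 ≤ a i) (hsum : ∑ i, a i = 1)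
    (i j : Fin n) (hij : i ≠ j) (hmax : ∀ k, a k ≤ a i) :
    hf (fun k => if k = i ∨ k = j then (a i + a j) / 2 else a k) ≤ hf a := by
  classical
  set a' : Fin n → ℝ := fun k => if k = i ∨ k = j then (a i + a j) / 2 else a k with ha'
  set s := (Finset.univ.erase i).erase j with hs
  have hjs : j ∉ s := fun h => (Finset.mem_erase.1 h).1 rfl
  have his : i ∉ s := fun h => (Finset.mem_erase.1 (Finset.mem_erase.1 h).2).1 rfl
  -- basic bounds
  have hle1 : ∀ k, a k ≤ 1 := by
    intro k
    calc a k ≤ ∑ l, a l := Finset.single_le_sum (fun l _ => ha l) (Finset.mem_univ k)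
    _ = 1 := hsum
  have hhalf : ∀ k ∈ s, a k ≤ 1 / 2 := by
    intro k hk
    have hki : k ≠ i := (Finset.mem_erase.1 (Finset.mem_erase.1 hk).2).1
    have : a k + a i ≤ 1 := by
      calc a k + a i = ∑ l ∈ {k, i}, a l := by
            rw [Finset.sum_pair hki]
      _ ≤ ∑ l, a l := Finset.sum_le_sum_of_subset_of_nonneg (Finset.subset_univ _)
            (fun l _ _ => ha l)
      _ = 1 := hsum
    have := hmax k
    linarith
  set P := ∏ l ∈ s, (1 - a l) with hP
  set W := ∑ k ∈ s, a k * ∏ l ∈ s.erase k, (1 - a l) with hW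
  have hPnonneg : 0 ≤ P := Finset.prod_nonneg fun l _ => by linarith [hle1 l]
  have hprodnonneg : ∀ k, (0:ℝ) ≤ ∏ l ∈ s.erase k, (1 - a l) :=
    fun k => Finset.prod_nonneg fun l _ => by linarith [hle1 l]
  -- W ≤ 2 P
  have hW2P : W ≤ 2 * P := by
    have step : ∀ k ∈ s, a k * ∏ l ∈ s.erase k, (1 - a l) ≤ 2 * a k * P := by
      intro k hk
      have h1 : a k * ∏ l ∈ s.erase k, (1 - a l) ≤ 2 * a k * (1 - a k) * ∏ l ∈ s.erase k, (1 - a l) := by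
        have h0 := hhalf k hk
        have h1 := ha k
        have key := mul_nonneg (mul_nonneg h1 (by linarith : (0:ℝ) ≤ 1 - 2 * a k)) (hprodnonneg k)
        nlinarith [key]
      have h2 : (1 - a k) * ∏ l ∈ s.erase k, (1 - a l) = P := by
        rw [hP, ← Finset.prod_erase_mul _ _ hk]; ring
      calc a k * ∏ l ∈ s.erase k, (1 - a l) ≤ 2 * a k * (1 - a k) * ∏ l ∈ s.erase k, (1 - a l) := h1
      _ = 2 * a k * ((1 - a k) * ∏ l ∈ s.erase k, (1 - a l)) := by ring
      _ = 2 * a k * P := by rw [h2]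
    have hsums : ∑ k ∈ s, a k ≤ 1 := by
      calc ∑ k ∈ s, a k ≤ ∑ k, a k := Finset.sum_le_sum_of_subset_of_nonneg (Finset.subset_univ _)
            (fun l _ _ => ha l)
      _ = 1 := hsum
    calc W ≤ ∑ k ∈ s, 2 * a k * P := Finset.sum_le_sum step
    _ = 2 * (∑ k ∈ s, a k) * P := by rw [← Finset.sum_mul, ← Finset.mul_sum]
    _ ≤ 2 * 1 * P := by
        have h0 : 0 ≤ ∑ k ∈ s, a k := Finset.sum_nonneg fun k _ => ha k
        nlinarith
    _ = 2 * P := by ring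
  -- primed quantities agree on s
  have hagree : ∀ k ∈ s, a' k = a k := by
    intro k hk
    have hki : k ≠ i := (Finset.mem_erase.1 (Finset.mem_erase.1 hk).2).1
    have hkj : k ≠ j := (Finset.mem_erase.1 hk).1
    simp [ha', hki, hkj]
  have hP' : ∏ l ∈ s, (1 - a' l) = P := Finset.prod_congr rfl fun l hl => by rw [hagree l hl]
  have hW' : ∑ k ∈ s, a' k * ∏ l ∈ s.erase k, (1 - a' l) = W := by
    apply Finset.sum_congr rfl
    intro k hk
    rw [hagree k hk]
    congr 1
    exact Finset.prod_congr rfl fun l hl => by rw [hagree l (Finset.mem_of_mem_erase hl)]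
  have hai' : a' i = (a i + a j) / 2 := by simp [ha']
  have haj' : a' j = (a i + a j) / 2 := by simp [ha']
  rw [hf_decomp a i j hij, hf_decomp a' i j hij, ← hs, hP', hW', hai', haj', ← hP, ← hW]
  have hpp : a i * a j ≤ ((a i + a j) / 2) * ((a i + a j) / 2) := by nlinarith [sq_nonneg (a i - a j)]
  nlinarith [hpp, hW2P, hPnonneg]

lemma hf_center {n : ℕ} (hn : 0 < n) : hf (fun _ : Fin n => 1 / n) = (1 - 1/(n:ℝ)) ^ (n - 1) := by
  have hcard : ∀ k : Fin n, (Finset.univ.erase k).card = n - 1 := by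
    intro k
    rw [Finset.card_erase_of_mem (Finset.mem_univ k), Finset.card_univ, Fintype.card_fin]
  have : hf (fun _ : Fin n => 1 / n) = ∑ k : Fin n, (1/(n:ℝ)) * (1 - 1/(n:ℝ)) ^ (n - 1) := by
    apply Finset.sum_congr rfl
    intro k _
    rw [Finset.prod_const, hcard k]
  rw [this, Finset.sum_const, Finset.card_univ, Fintype.card_fin, nsmul_eq_mul]
  have hn' : (n:ℝ) ≠ 0 := Nat.cast_ne_zero.2 hn.ne'
  field_simp

lemma key (n : ℕ) (hn : 0 < n) (a : Fin n → ℝ) (ha : ∀ i, 0 ≤ a i) (hsum : ∑ i, a i = 1) :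
    (1 - 1/(n:ℝ)) ^ (n - 1) ≤ hf a := by
  classical
  haveI : NeZero n := ⟨hn.ne'⟩
  have hn' : (n:ℝ) ≠ 0 := Nat.cast_ne_zero.2 hn.ne'
  have hK : IsCompact (stdSimplex ℝ (Fin n)) := isCompact_stdSimplex _ _
  have hcmem : (fun _ : Fin n => 1/(n:ℝ)) ∈ stdSimplex ℝ (Fin n) := by
    constructor
    · intro x
      positivity
    · rw [Finset.sum_const, Finset.card_univ, Fintype.card_fin, nsmul_eq_mul]
      field_simp
  obtain ⟨a0, ha0, hmin⟩ := hK.exists_isMinOn ⟨_, hcmem⟩ hf_cont.continuousOn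
  set S := stdSimplex ℝ (Fin n) ∩ hf ⁻¹' {hf a0} with hS
  have hScomp : IsCompact S := hK.inter_right (isClosed_singleton.preimage hf_cont)
  have hVcont : Continuous (fun b : Fin n → ℝ => ∑ k, (b k)^2) :=
    continuous_finset_sum _ fun k _ => (continuous_apply k).pow 2
  obtain ⟨b, hbS, hbmin⟩ := hScomp.exists_isMinOn ⟨a0, ha0, rfl⟩ hVcont.continuousOn
  obtain ⟨hbmem, hbval⟩ := hbS
  have hbnn : ∀ k, 0 ≤ b k := hbmem.1
  have hbsum : ∑ k, b k = 1 := hbmem.2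
  obtain ⟨i, hi⟩ := Finite.exists_max b
  have hconst : ∀ j, b j = b i := by
    intro j
    by_contra hne
    have hij : i ≠ j := fun h => hne (congrArg b h.symm)
    set b' : Fin n → ℝ := fun k => if k = i ∨ k = j then (b i + b j) / 2 else b k with hb'
    have hb'nn : ∀ k, 0 ≤ b' k := by
      intro k
      simp only [hb']
      split
      · linarith [hbnn i, hbnn j]
      · exact hbnn k
    have hb'sum : ∑ k, b' k = 1 := by
      have : ∑ k, b' k = ∑ k, b k := by
        rw [← Finset.add_sum_erase _ b' (Finset.mem_univ i),
          ← Finset.add_sum_erase _ b' (Finset.mem_erase.2 ⟨hij.symm, Finset.mem_univ j⟩),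
          ← Finset.add_sum_erase _ b (Finset.mem_univ i),
          ← Finset.add_sum_erase _ b (Finset.mem_erase.2 ⟨hij.symm, Finset.mem_univ j⟩)]
        have h1 : b' i = (b i + b j)/2 := by simp [hb']
        have h2 : b' j = (b i + b j)/2 := by simp [hb']
        have h3 : ∑ k ∈ (Finset.univ.erase i).erase j, b' k
            = ∑ k ∈ (Finset.univ.erase i).erase j, b k := by
          apply Finset.sum_congr rfl
          intro k hk
          have hki : k ≠ i := (Finset.mem_erase.1 (Finset.mem_erase.1 hk).2).1
          have hkj : k ≠ j := (Finset.mem_erase.1 hk).1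
          simp [hb', hki, hkj]
        rw [h1, h2, h3]
        ring
      rw [this, hbsum]
    have hb'mem : b' ∈ stdSimplex ℝ (Fin n) := ⟨hb'nn, hb'sum⟩
    have hsm : hf b' ≤ hf b := smooth b hbnn hbsum i j hij hi
    have hless : hf a0 ≤ hf b' := hmin hb'mem
    have hb'S : b' ∈ S := ⟨hb'mem, by
      simp only [Set.mem_preimage, Set.mem_singleton_iff]
      have : hf b = hf a0 := hbval
      linarith⟩
    have hVle : ∑ k, (b k)^2 ≤ ∑ k, (b' k)^2 := hbmin hb'S
    have hVlt : ∑ k, (b' k)^2 < ∑ k, (b k)^2 := by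
      rw [← Finset.add_sum_erase _ (fun k => (b' k)^2) (Finset.mem_univ i),
        ← Finset.add_sum_erase _ (fun k => (b' k)^2) (Finset.mem_erase.2 ⟨hij.symm, Finset.mem_univ j⟩),
        ← Finset.add_sum_erase _ (fun k => (b k)^2) (Finset.mem_univ i),
        ← Finset.add_sum_erase _ (fun k => (b k)^2) (Finset.mem_erase.2 ⟨hij.symm, Finset.mem_univ j⟩)]
      have h3 : ∑ k ∈ (Finset.univ.erase i).erase j, (b' k)^2
          = ∑ k ∈ (Finset.univ.erase i).erase j, (b k)^2 := by
        apply Finset.sum_congr rfl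
        intro k hk
        have hki : k ≠ i := (Finset.mem_erase.1 (Finset.mem_erase.1 hk).2).1
        have hkj : k ≠ j := (Finset.mem_erase.1 hk).1
        simp [hb', hki, hkj]
      have h1 : b' i = (b i + b j)/2 := by simp [hb']
      have h2 : b' j = (b i + b j)/2 := by simp [hb']
      rw [h1, h2, h3]
      have hd : b i - b j ≠ 0 := sub_ne_zero.2 (fun h => hne h.symm)
      have hlt : 0 < (b i - b j)^2 := by positivity
      nlinarith [hlt]
    linarith
  -- b is constant, equal to 1/n
  have hbi : b i = 1/(n:ℝ) := by
    have : ∑ k : Fin n, b k = n * b i := by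
      rw [Finset.sum_congr rfl (fun k _ => hconst k), Finset.sum_const, Finset.card_univ,
        Fintype.card_fin, nsmul_eq_mul]
    rw [hbsum] at this
    field_simp
    linarith
  have hbeq : b = fun _ : Fin n => 1/(n:ℝ) := by
    funext k
    rw [hconst k, hbi]
  have hfb : hf b = (1 - 1/(n:ℝ)) ^ (n - 1) := by
    rw [hbeq, hf_center hn]
  calc (1 - 1/(n:ℝ)) ^ (n-1) = hf b := hfb.symm
  _ = hf a0 := hbval
  _ ≤ hf a := hmin ⟨ha, hsum⟩

/-- Mini van der Waerden conjecture: for the doubly stochastic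
matrix `A = [a|b|…|b]` with `aᵢ ≥ 0`, `∑ aᵢ = 1` and `bᵢ = (1 - aᵢ)/(n-1)`,
one has `per(A) ≥ n!/nⁿ`. -/
theorem mini_vdw (n : ℕ) (hn : 2 ≤ n) (a : Fin n → ℝ)
    (ha : ∀ i, 0 ≤ a i) (hsum : ∑ i, a i = 1)
    (A : Matrix (Fin n) (Fin n) ℝ)
    (hA : ∀ i j, A i j = if (j : ℕ) = 0 then a i else (1 - a i) / ((n : ℝ) - 1)) :
    (n.factorial : ℝ) / (n : ℝ) ^ n ≤ perm A := by
  classical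
  obtain ⟨m, rfl⟩ : ∃ m, n = m + 1 := ⟨n - 1, by omega⟩
  have hm1 : 1 ≤ m := by omega
  haveI : NeZero (m + 1) := ⟨by omega⟩
  have hterm : ∀ σ : Equiv.Perm (Fin (m+1)), ∏ i, A i (σ i)
      = a (σ⁻¹ 0) * ∏ i ∈ Finset.univ.erase (σ⁻¹ 0), ((1 - a i) / (((m+1:ℕ):ℝ) - 1)) := by
    intro σ
    rw [← Finset.mul_prod_erase _ _ (Finset.mem_univ (σ⁻¹ 0))]
    congr 1
    · rw [hA]
      have h0 : σ (σ⁻¹ 0) = 0 := σ.apply_symm_apply 0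
      rw [h0]
      simp
    · apply Finset.prod_congr rfl
      intro i hi
      rw [hA]
      have hne : σ i ≠ 0 := by
        intro h
        apply (Finset.mem_erase.1 hi).1
        rw [← h, Equiv.Perm.inv_def, Equiv.symm_apply_apply]
      have hvne : ((σ i : Fin (m+1)) : ℕ) ≠ 0 := by
        intro hv
        exact hne (Fin.ext (by simp [hv]))
      simp [hvne]
  set g : Fin (m+1) → ℝ :=
    fun k => a k * ∏ i ∈ Finset.univ.erase k, ((1 - a i) / (((m+1:ℕ):ℝ) - 1)) with hg
  have step1 : perm A = ∑ σ : Equiv.Perm (Fin (m+1)), g (σ⁻¹ 0) :=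
    Finset.sum_congr rfl fun σ _ => hterm σ
  have step2 : perm A = ∑ σ : Equiv.Perm (Fin (m+1)), g (σ 0) := by
    rw [step1]
    exact Fintype.sum_equiv (Equiv.inv (Equiv.Perm (Fin (m+1)))) _ _ (fun σ => rfl)
  have step3 : perm A = (m.factorial : ℝ) * ∑ k : Fin (m+1), g k := by
    rw [step2]
    have heq := Fintype.sum_equiv (Equiv.Perm.decomposeFin.symm)
      (fun x : Fin (m+1) × Equiv.Perm (Fin m) => g ((Equiv.Perm.decomposeFin.symm x) 0))
      (fun σ : Equiv.Perm (Fin (m+1)) => g (σ 0)) (fun x => rfl)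
    rw [← heq]
    have h2 : ∀ x : Fin (m+1) × Equiv.Perm (Fin m),
        g ((Equiv.Perm.decomposeFin.symm x) 0) = g x.1 := by
      rintro ⟨p, τ⟩
      rw [Equiv.Perm.decomposeFin_symm_apply_zero]
    rw [Fintype.sum_congr _ _ h2, Fintype.sum_prod_type]
    simp [Finset.sum_const, Fintype.card_perm, Fintype.card_fin, mul_comm, Finset.mul_sum]
  have hc : (((m+1:ℕ):ℝ)) - 1 = (m:ℝ) := by push_cast; ring
  have hmpos : (0:ℝ) < (m:ℝ) := by exact_mod_cast hm1
  have step4 : ∑ k : Fin (m+1), g k = ((m:ℝ)^m)⁻¹ * hf a := by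
    rw [hf, Finset.mul_sum]
    apply Finset.sum_congr rfl
    intro k _
    simp only [hg]
    have hcard : (Finset.univ.erase k).card = m := by
      rw [Finset.card_erase_of_mem (Finset.mem_univ k), Finset.card_univ, Fintype.card_fin]
      omega
    rw [Finset.prod_div_distrib, Finset.prod_const, hcard, hc]
    field_simp
  have hkey := key (m+1) (by omega) a ha hsum
  have hn1 : m + 1 - 1 = m := by omega
  rw [hn1] at hkey
  have hfrac : (1 - 1/(((m+1:ℕ):ℝ))) = (m:ℝ)/((m:ℝ)+1) := by
    have h : (((m+1:ℕ)):ℝ) = (m:ℝ) + 1 := by push_cast; ring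
    rw [h]
    field_simp
    ring
  rw [hfrac] at hkey
  have hfactor : (0:ℝ) ≤ (m.factorial : ℝ) * ((m:ℝ)^m)⁻¹ := by positivity
  have heq2 : (Nat.factorial (m+1) : ℝ) / (((m+1:ℕ)):ℝ)^(m+1)
      = (m.factorial : ℝ) * ((m:ℝ)^m)⁻¹ * ((m:ℝ)/((m:ℝ)+1))^m := by
    have hnn : (((m+1:ℕ)):ℝ) = (m:ℝ) + 1 := by push_cast; ring
    rw [Nat.factorial_succ, hnn, div_pow, pow_succ]
    push_cast
    have h1 : ((m:ℝ)+1) ≠ 0 := by positivity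
    have h2 : ((m:ℝ)+1)^m ≠ 0 := by positivity
    have h3 : ((m:ℝ))^m ≠ 0 := by positivity
    field_simp
  calc (Nat.factorial (m+1) : ℝ) / (((m+1:ℕ)):ℝ)^(m+1)
      = (m.factorial : ℝ) * ((m:ℝ)^m)⁻¹ * ((m:ℝ)/((m:ℝ)+1))^m := heq2
    _ ≤ (m.factorial : ℝ) * ((m:ℝ)^m)⁻¹ * hf a := mul_le_mul_of_nonneg_left hkey hfactor
    _ = perm A := by rw [step3, step4]; ring
end

section
/- Let n ≥ 2 and let a = (a₁,...,aₙ) satisfy aᵢ ≥ 0 and Σᵢ₌₁ⁿ aᵢ = 1. Let b = (b₁,...,bₙ) with bᵢ = (1 − aᵢ)/(n−1), and let A be the n×n doubly stochastic matrix whose first column is a and whose remaining n−1 columns all equal b. If a ≠ (1/n, 1/n, ..., 1/n) then per(A) > n!/nⁿ; that is, equality per(A) = n!/nⁿ holds only when every entry of A equals 1/n. -/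
open Finset Real

lemma gsc : StrictConvexOn ℝ (Set.Iic (1:ℝ)) (fun t => (1-t) * Real.log (1-t)) := by
  refine ⟨convex_Iic 1, ?_⟩
  intro x hx y hy hxy p q hp hq hpq
  have h := Real.strictConvexOn_mul_log.2 (x := 1 - x) (y := 1 - y)
    (by simpa using hx) (by simpa using hy)
    (by intro h; apply hxy; linarith) hp hq hpq
  simp only [smul_eq_mul] at h ⊢
  have e : p*(1-x)+q*(1-y) = 1 - (p*x+q*y) := by nlinarith
  rwa [e] at h

lemma key_s8 (n : ℕ) (hn : 2 ≤ n) (a : Fin n → ℝ)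
    (ha : ∀ i, 0 ≤ a i) (hsum : ∑ i, a i = 1)
    (hne : a ≠ fun _ => 1 / (n : ℝ)) :
    ((n : ℝ) - 1) ^ (n - 1) * (n : ℝ) / (n : ℝ) ^ n <
      ∑ k, a k * ∏ i ∈ Finset.univ.erase k, (1 - a i) := by
  have hn0 : (0:ℝ) < n := by positivity
  have hn1 : (1:ℝ) ≤ (n:ℝ) - 1 := by
    have : (2:ℝ) ≤ n := by exact_mod_cast hn
    linarith
  have hLHS : ((n : ℝ) - 1) ^ (n - 1) * (n : ℝ) / (n : ℝ) ^ n
      = (((n:ℝ) - 1) / n) ^ (n - 1) := by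
    have hpow : (n:ℝ)^n = (n:ℝ)^(n-1) * n := by
      rw [← pow_succ]; congr 1; omega
    rw [hpow, div_pow]
    field_simp
  rw [hLHS]
  by_cases hone : ∃ k, a k = 1
  · -- some a_k = 1, all others 0, sum = 1
    obtain ⟨k, hk⟩ := hone
    have hz : ∀ i ∈ Finset.univ.erase k, a i = 0 := by
      have h1 : ∑ i ∈ Finset.univ.erase k, a i = 0 := by
        have := Finset.sum_erase_add Finset.univ a (Finset.mem_univ k)
        rw [hsum] at *
        linarith [this]
      intro i hi
      exact (Finset.sum_eq_zero_iff_of_nonneg (fun j _ => ha j)).1 h1 i hi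
    have hφ : ∑ j, a j * ∏ i ∈ Finset.univ.erase j, (1 - a i) = 1 := by
      rw [Finset.sum_eq_single k]
      · rw [hk, one_mul]
        rw [Finset.prod_eq_one]
        intro i hi; rw [hz i hi]; ring
      · intro j _ hj
        rw [hz j (Finset.mem_erase.2 ⟨hj, Finset.mem_univ j⟩), zero_mul]
      · intro h; exact absurd (Finset.mem_univ k) h
    rw [hφ]
    apply pow_lt_one₀
    · positivity
    · rw [div_lt_one hn0]; linarith
    · omega
  · push_neg at hone
    have halt : ∀ i, a i < 1 := fun i => lt_of_le_of_ne (by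
      -- a i ≤ 1 since sum = 1 and all nonneg
      calc a i ≤ ∑ j, a j := Finset.single_le_sum (fun j _ => ha j) (Finset.mem_univ i)
      _ = 1 := hsum) (hone i)
    have hpos : ∀ i, (0:ℝ) < 1 - a i := fun i => by linarith [halt i]
    set L : Fin n → ℝ := fun k => ∑ i ∈ Finset.univ.erase k, Real.log (1 - a i) with hL
    have hprod : ∀ k, ∏ i ∈ Finset.univ.erase k, (1 - a i) = Real.exp (L k) := by
      intro k
      rw [hL, Real.exp_sum]
      exact Finset.prod_congr rfl (fun i _ => (Real.exp_log (hpos i)).symm)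
    -- Jensen for exp
    have hjensen : Real.exp (∑ k, a k * L k) ≤ ∑ k, a k * Real.exp (L k) := by
      have := convexOn_exp.map_sum_le (t := Finset.univ) (w := a) (p := L)
        (fun i _ => ha i) hsum (fun i _ => Set.mem_univ _)
      simpa [smul_eq_mul] using this
    -- compute ∑ a k * L k = ∑ (1 - a i) log (1 - a i)
    have hS : ∑ k, a k * L k = ∑ i, (1 - a i) * Real.log (1 - a i) := by
      have hLk : ∀ k : Fin n, L k = (∑ i, Real.log (1 - a i)) - Real.log (1 - a k) := by
        intro k
        rw [hL]
        exact Finset.sum_erase_eq_sub (Finset.mem_univ k)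
      calc ∑ k, a k * L k
          = ∑ k, (a k * (∑ i, Real.log (1 - a i)) - a k * Real.log (1 - a k)) := by
            refine Finset.sum_congr rfl (fun k _ => ?_); rw [hLk k]; ring
        _ = (∑ k, a k) * (∑ i, Real.log (1 - a i)) - ∑ k, a k * Real.log (1 - a k) := by
            rw [Finset.sum_sub_distrib, Finset.sum_mul]
        _ = ∑ i, (1 - a i) * Real.log (1 - a i) := by
            rw [hsum, one_mul, ← Finset.sum_sub_distrib]
            refine Finset.sum_congr rfl (fun i _ => ?_); ring
    -- strict Jensen for g
    have hmean : ∑ i : Fin n, (n:ℝ)⁻¹ * a i = 1/n := by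
      rw [← Finset.mul_sum, hsum, mul_one, one_div]
    have hexists : ∃ j : Fin n, ∃ k : Fin n, a j ≠ a k := by
      by_contra hc
      push_neg at hc
      apply hne
      funext i
      have hall : ∀ j, a j = a i := fun j => hc j i
      have : ∑ j, a j = n * a i := by
        rw [Finset.sum_congr rfl (fun j _ => hall j)]
        simp [Finset.card_univ, mul_comm]
      rw [hsum] at this
      field_simp
      linarith
    obtain ⟨j, k, hjk⟩ := hexists
    have hstrict := gsc.map_sum_lt (t := Finset.univ) (w := fun _ : Fin n => (n:ℝ)⁻¹)
      (p := a) (fun i _ => by positivity)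
      (by simp [Finset.card_univ]; field_simp)
      (fun i _ => Set.mem_Iic.2 (le_of_lt (halt i)))
      ⟨j, Finset.mem_univ j, k, Finset.mem_univ k, hjk⟩
    simp only [smul_eq_mul] at hstrict
    rw [hmean] at hstrict
    -- hstrict : (1-1/n)*log(1-1/n) < ∑ i, n⁻¹ * ((1 - a i) * log (1 - a i))
    have hsum_g : (n:ℝ) * ((1 - 1/n) * Real.log (1 - 1/n)) <
        ∑ i, (1 - a i) * Real.log (1 - a i) := by
      have h2 : ∑ i : Fin n, (n:ℝ)⁻¹ * ((1 - a i) * Real.log (1 - a i))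
          = (n:ℝ)⁻¹ * ∑ i, (1 - a i) * Real.log (1 - a i) := by
        rw [Finset.mul_sum]
      rw [h2] at hstrict
      rw [show ((n:ℝ))⁻¹ * (∑ i, (1 - a i) * Real.log (1 - a i))
            = (∑ i, (1 - a i) * Real.log (1 - a i)) / n by ring,
          lt_div_iff₀ hn0] at hstrict
      linarith
    have htarget : (((n:ℝ) - 1) / n) ^ (n - 1)
        = Real.exp ((n:ℝ) * ((1 - 1/n) * Real.log (1 - 1/n))) := by
      have hq : (1:ℝ) - 1/n = ((n:ℝ)-1)/n := by field_simp
      have hqpos : (0:ℝ) < ((n:ℝ)-1)/n := by positivity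
      rw [hq]
      have heq : (n:ℝ) * ((((n:ℝ)-1)/n) * Real.log (((n:ℝ)-1)/n))
          = ((n:ℝ) - 1) * Real.log (((n:ℝ)-1)/n) := by field_simp
      rw [heq]
      have hnat : ((n:ℝ) - 1) = ((n - 1 : ℕ) : ℝ) := by
        have h1 : (1:ℕ) ≤ n := by omega
        push_cast [h1]; ring
      have h5 : Real.exp (((n - 1 : ℕ):ℝ) * Real.log (((n:ℝ)-1)/n))
          = (((n:ℝ)-1)/n) ^ (n-1) := by
        rw [Real.exp_nat_mul, Real.exp_log hqpos]
      rw [← hnat] at h5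
      exact h5.symm
    calc (((n:ℝ) - 1) / n) ^ (n - 1)
        = Real.exp ((n:ℝ) * ((1 - 1/n) * Real.log (1 - 1/n))) := htarget
      _ < Real.exp (∑ i, (1 - a i) * Real.log (1 - a i)) := Real.exp_lt_exp.2 hsum_g
      _ = Real.exp (∑ k, a k * L k) := by rw [hS]
      _ ≤ ∑ k, a k * Real.exp (L k) := hjensen
      _ = ∑ k, a k * ∏ i ∈ Finset.univ.erase k, (1 - a i) := by
          refine Finset.sum_congr rfl (fun k _ => ?_); rw [hprod k]



/-- Uniqueness in the mini van der Waerden conjecture: for the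
doubly stochastic matrix `A = [a|b|…|b]` with `aᵢ ≥ 0`, `∑ aᵢ = 1` and
`bᵢ = (1 - aᵢ)/(n-1)`, if `a ≠ (1/n, …, 1/n)` then `per(A) > n!/nⁿ`. -/
theorem mini_vdw_uniqueness (n : ℕ) (hn : 2 ≤ n) (a : Fin n → ℝ)
    (ha : ∀ i, 0 ≤ a i) (hsum : ∑ i, a i = 1)
    (hne : a ≠ fun _ => 1 / (n : ℝ))
    (A : Matrix (Fin n) (Fin n) ℝ)
    (hA : ∀ i j, A i j = if (j : ℕ) = 0 then a i else (1 - a i) / ((n : ℝ) - 1)) :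
    (n.factorial : ℝ) / (n : ℝ) ^ n < perm A := by
  have hkey := key_s8 n hn a ha hsum hne
  obtain ⟨m, rfl⟩ : ∃ m, n = m + 1 := ⟨n - 1, by omega⟩
  have hm : 1 ≤ m := by omega
  have hd : ((m+1 : ℕ) : ℝ) - 1 = (m:ℝ) := by push_cast; ring
  set c : Fin (m+1) → ℝ :=
    fun k => a k * ∏ i ∈ Finset.univ.erase k, ((1 - a i) / (m : ℝ)) with hc
  have h1 : ∀ σ : Equiv.Perm (Fin (m+1)), ∏ i, A i (σ i) = c (σ⁻¹ 0) := by
    intro σ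
    rw [← Finset.mul_prod_erase Finset.univ (fun i => A i (σ i))
        (Finset.mem_univ (σ⁻¹ 0))]
    rw [hc]
    congr 1
    · rw [hA, (by exact Equiv.apply_symm_apply σ 0 : σ (σ⁻¹ 0) = 0)]
      simp
    · refine Finset.prod_congr rfl (fun i hi => ?_)
      rw [hA]
      rw [if_neg, hd]
      intro hv
      have : σ i = 0 := Fin.ext (by simpa using hv)
      have : i = σ⁻¹ 0 := by rw [← this, (by exact Equiv.symm_apply_apply σ i : σ⁻¹ (σ i) = i)]
      exact (Finset.mem_erase.1 hi).1 this
  have h2 : perm A = (m.factorial : ℝ) * ∑ k, c k := by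
    unfold perm
    rw [Finset.sum_congr rfl (fun σ _ => h1 σ)]
    have e1 : ∑ σ : Equiv.Perm (Fin (m+1)), c (σ⁻¹ 0)
        = ∑ σ : Equiv.Perm (Fin (m+1)), c (σ 0) :=
      Equiv.sum_comp (Equiv.inv (Equiv.Perm (Fin (m+1)))) (fun σ => c (σ 0))
    rw [e1, ← Equiv.sum_comp Equiv.Perm.decomposeFin.symm (fun σ => c (σ 0))]
    rw [Fintype.sum_prod_type]
    simp only [Equiv.Perm.decomposeFin_symm_apply_zero]
    rw [Finset.mul_sum]
    refine Finset.sum_congr rfl (fun p _ => ?_)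
    rw [Finset.sum_const, Finset.card_univ, Fintype.card_perm, Fintype.card_fin,
      nsmul_eq_mul]
  -- rewrite c in terms of φ
  have hmpos : (0:ℝ) < (m:ℝ) := by positivity
  have hcard : ∀ k : Fin (m+1), (Finset.univ.erase k).card = m := by
    intro k
    rw [Finset.card_erase_of_mem (Finset.mem_univ k), Finset.card_univ,
      Fintype.card_fin]
    omega
  have h3 : ∑ k, c k
      = (∑ k, a k * ∏ i ∈ Finset.univ.erase k, (1 - a i)) / (m:ℝ)^m := by
    rw [Finset.sum_div]
    refine Finset.sum_congr rfl (fun k _ => ?_)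
    simp only [hc]
    rw [Finset.prod_div_distrib, Finset.prod_const, hcard k]
    ring
  -- the key inequality, with casts simplified
  set φ := ∑ k, a k * ∏ i ∈ Finset.univ.erase k, (1 - a i) with hφdef
  have hkey' : ((m:ℝ)^m * ((m:ℝ)+1)) / ((m:ℝ)+1)^(m+1) < φ := by
    have hn1 : ((m+1:ℕ):ℝ) = (m:ℝ)+1 := by push_cast; ring
    have hs : (m+1) - 1 = m := by omega
    rw [hs, hd, hn1] at hkey
    exact hkey
  have hfac : (0:ℝ) < (m.factorial : ℝ) := by positivity
  have h8 : ((m:ℝ)+1)/((m:ℝ)+1)^(m+1) < φ / (m:ℝ)^m := by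
    rw [div_lt_div_iff₀ (by positivity) (by positivity)]
    rw [div_lt_iff₀ (by positivity)] at hkey'
    nlinarith [hkey']
  calc ((m+1).factorial : ℝ) / ((m+1:ℕ):ℝ) ^ (m+1)
      = (m.factorial : ℝ) * (((m:ℝ)+1) / ((m:ℝ)+1)^(m+1)) := by
        rw [Nat.factorial_succ]
        push_cast
        ring
    _ < (m.factorial : ℝ) * (φ / (m:ℝ)^m) := by
        exact mul_lt_mul_of_pos_left h8 hfac
    _ = perm A := by rw [h2, h3]
end

section
/- Let R(t) = ∏ᵢ₌₁ⁿ (aᵢ t + bᵢ) be a univariate real polynomial with aᵢ ≥ 0 and bᵢ ≥ 0 for all i, and suppose there is a real number C > 0 such that R(t) ≥ C·t for all t ≥ 0. Then the coefficient of t in R, namely d₁ = R′(0), satisfies d₁ ≥ C · ((n−1)/n)^{n−1}. -/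
open Polynomial Finset

lemma amgm_prod_le (n : ℕ) (hn : 0 < n) (z : Fin n → ℝ) (hz : ∀ i, 0 ≤ z i) :
    ∏ i, z i ≤ ((∑ i, z i) / n) ^ n := by
  have hn' : (0:ℝ) < n := by exact_mod_cast hn
  have key := Real.geom_mean_le_arith_mean_weighted Finset.univ (fun _ => 1/(n:ℝ)) z
    (fun i _ => by positivity) (by simp; field_simp) (fun i _ => hz i)
  have hprod : ∏ i, z i ^ (1/(n:ℝ)) = (∏ i, z i) ^ (1/(n:ℝ)) :=
    Real.finset_prod_rpow _ _ (fun i _ => hz i) _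
  rw [hprod] at key
  have hsum : ∑ i, (1/(n:ℝ)) * z i = (∑ i, z i)/n := by
    rw [← Finset.mul_sum]; ring
  rw [hsum] at key
  have h0 : (0:ℝ) ≤ ∏ i, z i := Finset.prod_nonneg (fun i _ => hz i)
  calc ∏ i, z i = ((∏ i, z i) ^ (1/(n:ℝ))) ^ (n:ℕ) := by
        rw [← Real.rpow_natCast ((∏ i, z i) ^ (1/(n:ℝ))), ← Real.rpow_mul h0]
        rw [one_div, inv_mul_cancel₀ (ne_of_gt hn'), Real.rpow_one]
    _ ≤ ((∑ i, z i)/n) ^ (n:ℕ) := pow_le_pow_left₀ (Real.rpow_nonneg h0 _) key n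

lemma derivative_finset_prod {ι : Type*} [DecidableEq ι] (s : Finset ι) (f : ι → Polynomial ℝ) :
    Polynomial.derivative (∏ i ∈ s, f i)
      = ∑ i ∈ s, (∏ j ∈ s.erase i, f j) * Polynomial.derivative (f i) := by
  induction s using Finset.induction_on with
  | empty => simp
  | @insert a s ha ih =>
    rw [Finset.prod_insert ha, Polynomial.derivative_mul, ih, Finset.sum_insert ha,
      Finset.erase_insert ha, Finset.mul_sum]
    have h2 : ∀ j ∈ s, (∏ x ∈ (insert a s).erase j, f x) * Polynomial.derivative (f j)
        = f a * ((∏ x ∈ s.erase j, f x) * Polynomial.derivative (f j)) := by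
      intro j hj
      rw [Finset.erase_insert_of_ne (ne_of_mem_of_not_mem hj ha).symm,
        Finset.prod_insert (fun h => ha (Finset.mem_of_mem_erase h)), mul_assoc]
    rw [Finset.sum_congr rfl h2]
    ring

/-- Let `R(t) = ∏ᵢ (aᵢ t + bᵢ)` with `aᵢ, bᵢ ≥ 0`, and suppose
`R(t) ≥ C·t` for all `t ≥ 0`, where `C > 0`. Then the linear coefficient
`d₁ = R′(0)` satisfies `d₁ ≥ C · ((n-1)/n)^{n-1}`. -/
theorem linear_coeff_lower_bound (n : ℕ) (a b : Fin n → ℝ)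
    (ha : ∀ i, 0 ≤ a i) (hb : ∀ i, 0 ≤ b i)
    (R : Polynomial ℝ)
    (hRdef : R = ∏ i, (Polynomial.C (a i) * Polynomial.X + Polynomial.C (b i)))
    (C : ℝ) (hC : 0 < C)
    (hR : ∀ t : ℝ, 0 ≤ t → C * t ≤ R.eval t) :
    C * (((n : ℝ) - 1) / (n : ℝ)) ^ (n - 1) ≤ R.coeff 1 := by
  have heval : ∀ t : ℝ, R.eval t = ∏ i, (a i * t + b i) := by
    intro t; simp [hRdef, Polynomial.eval_prod]
  have hcoeff : R.coeff 1 = ∑ i, a i * ∏ j ∈ Finset.univ.erase i, b j := by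
    have h1 : R.coeff 1 = (Polynomial.derivative R).eval 0 := by
      rw [← Polynomial.coeff_zero_eq_eval_zero, Polynomial.coeff_derivative]
      push_cast; ring
    rw [h1, hRdef, derivative_finset_prod]
    simp [Polynomial.eval_finset_sum, Polynomial.eval_prod]
    exact Finset.sum_congr rfl fun i _ => mul_comm _ _
  rcases Nat.eq_zero_or_pos n with hn0 | hn
  · exfalso
    subst hn0
    have h1 := hR (2/C) (by positivity)
    rw [heval] at h1
    simp only [Finset.univ_eq_empty, Finset.prod_empty] at h1
    have : C * (2/C) = 2 := by field_simp
    linarith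
  have hrle1 : (((n : ℝ) - 1) / (n : ℝ)) ^ (n - 1) ≤ 1 := by
    have hn' : (1:ℝ) ≤ n := by exact_mod_cast hn
    apply pow_le_one₀
    · apply div_nonneg (by linarith) (by linarith)
    · rw [div_le_one (by linarith)]; linarith
  have hrnn : 0 ≤ (((n : ℝ) - 1) / (n : ℝ)) ^ (n - 1) := by
    have hn' : (1:ℝ) ≤ n := by exact_mod_cast hn
    apply pow_nonneg
    apply div_nonneg (by linarith) (by linarith)
  by_cases hbz : ∃ i, b i = 0
  · obtain ⟨i, hbi⟩ := hbz
    set g : ℝ → ℝ := fun t => a i * ∏ j ∈ Finset.univ.erase i, (a j * t + b j) with hg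
    have hgC : ∀ t : ℝ, 0 < t → C ≤ g t := by
      intro t ht
      have h1 := hR t ht.le
      rw [heval, ← Finset.mul_prod_erase Finset.univ _ (Finset.mem_univ i), hbi,
        add_zero] at h1
      have h2 : a i * t * ∏ j ∈ Finset.univ.erase i, (a j * t + b j) = g t * t := by
        rw [hg]; ring
      rw [h2] at h1
      exact le_of_mul_le_mul_right h1 ht
    have hgcont : Continuous g := by
      apply Continuous.mul continuous_const
      exact continuous_finset_prod _ (fun j _ => by continuity)
    have hkey : C ≤ g 0 := by
      have ht : Filter.Tendsto g (nhdsWithin 0 (Set.Ioi 0)) (nhds (g 0)) :=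
        (hgcont.tendsto 0).mono_left nhdsWithin_le_nhds
      exact ge_of_tendsto ht (Filter.eventually_of_mem self_mem_nhdsWithin
        (fun t ht' => hgC t ht'))
    have hg0 : g 0 = a i * ∏ j ∈ Finset.univ.erase i, b j := by simp [hg]
    calc C * (((n : ℝ) - 1) / (n : ℝ)) ^ (n - 1) ≤ C * 1 :=
          mul_le_mul_of_nonneg_left hrle1 hC.le
      _ = C := mul_one C
      _ ≤ a i * ∏ j ∈ Finset.univ.erase i, b j := hg0 ▸ hkey
      _ ≤ R.coeff 1 := by
          rw [hcoeff]
          exact Finset.single_le_sum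
            (f := fun i => a i * ∏ j ∈ Finset.univ.erase i, b j)
            (fun j _ => mul_nonneg (ha j) (Finset.prod_nonneg (fun l _ => hb l)))
            (Finset.mem_univ i)
  · push_neg at hbz
    have hbpos : ∀ i, 0 < b i := fun i => (hb i).lt_of_ne (fun h => hbz i h.symm)
    set P := ∏ i, b i with hPdef
    set S := ∑ i, a i / b i with hSdef
    have hP : 0 < P := Finset.prod_pos (fun i _ => hbpos i)
    have hd1 : R.coeff 1 = P * S := by
      rw [hcoeff, hSdef, Finset.mul_sum]
      apply Finset.sum_congr rfl
      intro i _
      rw [hPdef, ← Finset.mul_prod_erase Finset.univ b (Finset.mem_univ i)]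
      field_simp [hbz i]
    have hSpos : 0 < S := by
      rcases (Finset.sum_nonneg (fun i _ => div_nonneg (ha i) (hb i)) :
        (0:ℝ) ≤ S).lt_or_eq with h | h
      · exact h
      exfalso
      have hall : ∀ i, a i = 0 := by
        intro i
        have h0 := (Finset.sum_eq_zero_iff_of_nonneg
          (fun j _ => div_nonneg (ha j) (hb j))).mp h.symm i (Finset.mem_univ i)
        have hbi := (hbpos i).ne'
        field_simp at h0
        simpa using h0
      have h1 := hR ((P+1)/C) (by positivity)
      rw [heval] at h1
      simp only [hall, zero_mul, zero_add] at h1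
      have h2 : C * ((P+1)/C) = P + 1 := by field_simp
      rw [h2, ← hPdef] at h1
      linarith
    rcases Nat.lt_or_ge n 2 with hn2 | hn2
    · -- n = 1
      have hn1 : n = 1 := by omega
      subst hn1
      have hCa : C ≤ a 0 := by
        by_contra hcon
        push_neg at hcon
        have hden : 0 < C - a 0 := by linarith
        have h1 := hR ((b 0 + 1)/(C - a 0))
          (le_of_lt (div_pos (by linarith [hbpos 0]) hden))
        rw [heval, Fin.prod_univ_one] at h1
        set t := (b 0 + 1)/(C - a 0) with htdef
        have ht : (C - a 0) * t = b 0 + 1 := by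
          rw [htdef]; field_simp
        have hexp : (C - a 0) * t = C * t - a 0 * t := by ring
        linarith
      have hc1 : R.coeff 1 = a 0 := by
        rw [hcoeff]
        simp
      rw [hc1]
      norm_num
      linarith
    · -- n ≥ 2
      set k := n - 1 with hk
      have hnk : n = k + 1 := by omega
      have hkpos : 1 ≤ k := by omega
      have hK : (0:ℝ) < k := by exact_mod_cast hkpos
      have hN : (0:ℝ) < n := by exact_mod_cast hn
      have hNk : ((k:ℝ)) = (n:ℝ) - 1 := by rw [hnk]; push_cast; ring
      set t₀ := (n:ℝ) / (S * k) with ht₀def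
      have ht₀ : 0 < t₀ := by positivity
      have h1 := hR t₀ ht₀.le
      rw [heval] at h1
      have hfac : ∀ i : Fin n, a i * t₀ + b i = b i * (1 + (a i / b i) * t₀) :=
        fun i => by field_simp [hbz i]; ring
      have hprodsplit : ∏ i, (a i * t₀ + b i) = P * ∏ i, (1 + (a i / b i) * t₀) := by
        rw [hPdef, ← Finset.prod_mul_distrib]
        exact Finset.prod_congr rfl (fun i _ => hfac i)
      have hznn : ∀ i : Fin n, 0 ≤ 1 + (a i / b i) * t₀ := fun i => by
        have := mul_nonneg (div_nonneg (ha i) (hb i)) ht₀.le; linarith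
      have hamgm := amgm_prod_le n hn (fun i => 1 + (a i / b i) * t₀) hznn
      have hsumz : ∑ i, (1 + (a i / b i) * t₀) = n + S * t₀ := by
        rw [Finset.sum_add_distrib, Finset.sum_const, Finset.card_univ, ← Finset.sum_mul,
          ← hSdef]
        simp
      rw [hsumz] at hamgm
      have hmean : ((n:ℝ) + S * t₀) / n = (n:ℝ) / k := by
        rw [ht₀def]
        field_simp
        linear_combination hNk
      rw [hmean] at hamgm
      have h2 : C * t₀ ≤ P * ((n:ℝ)/k) ^ n := by
        calc C * t₀ ≤ ∏ i, (a i * t₀ + b i) := h1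
          _ = P * ∏ i, (1 + (a i / b i) * t₀) := hprodsplit
          _ ≤ P * ((n:ℝ)/k) ^ n := mul_le_mul_of_nonneg_left hamgm hP.le
      have key : C ≤ P * S * ((n:ℝ)/k) ^ k := by
        have h3 := mul_le_mul_of_nonneg_right h2
          (le_of_lt (by positivity : (0:ℝ) < S * k / n))
        calc C = C * t₀ * (S * k / n) := by
              rw [ht₀def]; field_simp
          _ ≤ P * ((n:ℝ)/k) ^ n * (S * k / n) := h3
          _ = P * S * ((n:ℝ)/k) ^ k := by
              rw [hnk, pow_succ]
              field_simp
      rw [hd1, ← hNk]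
      calc C * ((k:ℝ)/n) ^ k ≤ (P * S * ((n:ℝ)/k) ^ k) * ((k:ℝ)/n) ^ k :=
            mul_le_mul_of_nonneg_right key (by positivity)
        _ = P * S * (((n:ℝ)/k) * ((k:ℝ)/n)) ^ k := by rw [mul_assoc, ← mul_pow]
        _ = P * S := by
            rw [div_mul_div_comm, mul_comm (n:ℝ) (k:ℝ), div_self (by positivity), one_pow,
              mul_one]
end

section
/- Let R(t) = Σᵢ₌₀ⁿ dᵢ tⁱ be a univariate polynomial with nonnegative real coefficients satisfying the weak Newton inequalities dᵢ · d₀^{i−1} ≤ (d₁/n)ⁱ · C(n,i) for all 2 ≤ i ≤ n, where C(n,i) is the binomial coefficient. If there is a real number C > 0 such that R(t) ≥ C·t for all t ≥ 0, then d₁ ≥ C · ((n−1)/n)^{n−1}. -/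
/-- If `C*t ≤ a + b*t` for all `t ≥ 0` and `C > 0`, `a ≥ 0`, then `C ≤ b`. -/
lemma aux_linear (C a b : ℝ) (hC : 0 < C) (ha : 0 ≤ a)
    (h : ∀ t : ℝ, 0 ≤ t → C * t ≤ a + b * t) : C ≤ b := by
  by_contra hlt
  push_neg at hlt
  have hcb : 0 < C - b := by linarith
  have ht : (0:ℝ) ≤ (a + 1) / (C - b) := by positivity
  have h2 := h _ ht
  have h3 : (C - b) * ((a + 1) / (C - b)) ≤ a := by linarith
  rw [mul_div_cancel₀ _ (ne_of_gt hcb)] at h3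
  linarith

/-- Let `R(t) = ∑_{i=0}^{n} dᵢ tⁱ` have nonnegative coefficients
satisfying the weak Newton inequalities
`dᵢ · d₀^{i-1} ≤ (d₁/n)ⁱ · (n choose i)` for `2 ≤ i ≤ n`. If `R(t) ≥ C·t` for
all `t ≥ 0` with `C > 0`, then `d₁ ≥ C · ((n-1)/n)^{n-1}`. -/
theorem weak_newton_linear_coeff_bound (n : ℕ) (d : ℕ → ℝ)
    (hd : ∀ i, 0 ≤ d i)
    (hWN : ∀ i, 2 ≤ i → i ≤ n →
      d i * d 0 ^ (i - 1) ≤ (d 1 / (n : ℝ)) ^ i * (n.choose i : ℝ))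
    (C : ℝ) (hC : 0 < C)
    (hR : ∀ t : ℝ, 0 ≤ t → C * t ≤ ∑ i ∈ Finset.range (n + 1), d i * t ^ i) :
    C * (((n : ℝ) - 1) / (n : ℝ)) ^ (n - 1) ≤ d 1 := by
  have hfac1 : (((n : ℝ) - 1) / (n : ℝ)) ^ (n - 1) ≤ 1 := by
    rcases Nat.eq_zero_or_pos n with h0 | hn
    · simp [h0]
    · have hn1 : (1:ℝ) ≤ (n:ℝ) := by exact_mod_cast hn
      apply pow_le_one₀
      · apply div_nonneg <;> linarith
      · rw [div_le_one (by linarith)]; linarith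
  have easy : C ≤ d 1 → C * (((n : ℝ) - 1) / (n : ℝ)) ^ (n - 1) ≤ d 1 := by
    intro h
    calc C * (((n : ℝ) - 1) / (n : ℝ)) ^ (n - 1) ≤ C * 1 :=
          mul_le_mul_of_nonneg_left hfac1 hC.le
      _ = C := mul_one C
      _ ≤ d 1 := h
  rcases lt_or_ge n 2 with hn2 | hn2
  · -- n ≤ 1 : linear case
    apply easy
    interval_cases n
    · have h0 : C ≤ 0 := by
        apply aux_linear C (d 0) 0 hC (hd 0)
        intro t ht
        have h := hR t ht
        norm_num [Finset.sum_range_succ] at h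
        linarith
      linarith
    · apply aux_linear C (d 0) (d 1) hC (hd 0)
      intro t ht
      have h := hR t ht
      norm_num [Finset.sum_range_succ] at h
      linarith
  -- now n ≥ 2
  have hnR : (2:ℝ) ≤ (n:ℝ) := by exact_mod_cast hn2
  rcases eq_or_lt_of_le (hd 0) with hd0 | hd0
  · -- d 0 = 0 : show C ≤ d 1 by taking t → 0
    apply easy
    have key : ∀ ε : ℝ, 0 < ε → C ≤ d 1 + ε := by
      intro ε hε
      set S : ℝ := ∑ i ∈ Finset.range (n + 1), d i with hS
      have hS0 : 0 ≤ S := Finset.sum_nonneg fun i _ => hd i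
      set t : ℝ := min 1 (ε / (S + 1)) with htdef
      have ht0 : 0 < t := lt_min one_pos (by positivity)
      have ht1 : t ≤ 1 := min_le_left _ _
      have hts : t * S ≤ ε := by
        have h1 : t ≤ ε / (S + 1) := min_le_right _ _
        have h2 : t * S ≤ (ε / (S + 1)) * S := mul_le_mul_of_nonneg_right h1 hS0
        calc t * S ≤ (ε / (S + 1)) * S := h2
          _ ≤ ε := by
            rw [div_mul_eq_mul_div, div_le_iff₀ (by positivity)]
            nlinarith
      have hbound : ∑ i ∈ Finset.range (n + 1), d i * t ^ i ≤ d 1 * t + t ^ 2 * S := by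
        have hsplit : ∑ i ∈ Finset.range (n + 1), d i * t ^ i
            = (∑ i ∈ Finset.range 2, d i * t ^ i)
              + ∑ i ∈ Finset.Ico 2 (n + 1), d i * t ^ i := by
          rw [Finset.range_eq_Ico]
          exact (Finset.sum_Ico_consecutive _ (show 0 ≤ 2 by norm_num) (show 2 ≤ n + 1 by omega)).symm
        have htail : ∑ i ∈ Finset.Ico 2 (n + 1), d i * t ^ i ≤ t ^ 2 * S := by
          calc ∑ i ∈ Finset.Ico 2 (n + 1), d i * t ^ i
              ≤ ∑ i ∈ Finset.Ico 2 (n + 1), d i * t ^ 2 := by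
                apply Finset.sum_le_sum
                intro i hi
                exact mul_le_mul_of_nonneg_left
                  (pow_le_pow_of_le_one ht0.le ht1 (Finset.mem_Ico.1 hi).1) (hd i)
            _ = t ^ 2 * ∑ i ∈ Finset.Ico 2 (n + 1), d i := by
                rw [Finset.mul_sum]; apply Finset.sum_congr rfl; intros; ring
            _ ≤ t ^ 2 * S := by
                apply mul_le_mul_of_nonneg_left _ (by positivity)
                rw [hS, Finset.range_eq_Ico]
                apply Finset.sum_le_sum_of_subset_of_nonneg
                · exact Finset.Ico_subset_Ico (by norm_num) le_rfl
                · intro i _ _; exact hd i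
        rw [hsplit, Finset.sum_range_succ, Finset.sum_range_one, ← hd0]
        simp only [pow_zero, pow_one, mul_one, zero_mul, zero_add]
        linarith
      have h2 := le_trans (hR t ht0.le) hbound
      nlinarith [h2, ht0, hts]
    by_contra h
    push_neg at h
    have := key ((C - d 1) / 2) (by linarith)
    linarith
  rcases eq_or_lt_of_le (hd 1) with hd1 | hd1
  · -- d 1 = 0: all higher coefficients vanish, R constant, contradiction
    exfalso
    have hall : ∀ i, 2 ≤ i → i ≤ n → d i = 0 := by
      intro i h2 hin
      have hw := hWN i h2 hin
      rw [← hd1, zero_div, zero_pow (by omega)] at hw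
      have hp : 0 < d 0 ^ (i - 1) := pow_pos hd0 _
      nlinarith [hd i]
    have hconst : ∀ t : ℝ, 0 ≤ t → C * t ≤ d 0 + 0 * t := by
      intro t ht
      have h := hR t ht
      have heq : ∑ i ∈ Finset.range (n + 1), d i * t ^ i = d 0 := by
        rw [Finset.sum_eq_single 0]
        · simp
        · intro i hi hne
          have hz : d i = 0 := by
            rcases Nat.lt_or_ge i 2 with hlt | hge
            · interval_cases i
              · exact absurd rfl hne
              · exact hd1.symm
            · exact hall i hge (Nat.lt_succ_iff.1 (Finset.mem_range.1 hi))
          rw [hz, zero_mul]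
        · intro h0; simp at h0
      rw [heq] at h
      linarith
    linarith [aux_linear C (d 0) 0 hC hd0.le hconst]
  -- main case: n ≥ 2, d 0 > 0, d 1 > 0
  have hnpos : (0:ℝ) < (n:ℝ) := by linarith
  have hm : (0:ℝ) < (n:ℝ) - 1 := by linarith
  set N : ℝ := (n:ℝ) with hN
  set t0 : ℝ := N * d 0 / ((N - 1) * d 1) with ht0def
  have ht0pos : 0 < t0 := by positivity
  have ht0x : t0 = (N * d 0 / d 1) * (1 / (N - 1)) := by
    rw [ht0def]; field_simp
  have hterm : ∀ i ∈ Finset.range (n + 1),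
      d i * t0 ^ i ≤ (1 / (N - 1)) ^ i * 1 ^ (n - i) * (n.choose i : ℝ) * d 0 := by
    intro i hi
    have hin : i ≤ n := Nat.lt_succ_iff.1 (Finset.mem_range.1 hi)
    rw [one_pow, mul_one]
    rcases Nat.lt_or_ge i 2 with h2 | h2
    · interval_cases i
      · simp
      · have hch : (n.choose 1 : ℝ) = N := by rw [Nat.choose_one_right, hN]
        rw [ht0x, hch, pow_one, pow_one]
        apply le_of_eq
        field_simp
    · have hwn := hWN i h2 hin
      have hi1 : i - 1 + 1 = i := by omega
      have hsplit : d 0 ^ i = d 0 ^ (i - 1) * d 0 := by rw [← pow_succ, hi1]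
      have hcancel : (d 1 / N) ^ i * (N / d 1) ^ i = 1 := by
        rw [← mul_pow, div_mul_div_comm, mul_comm (d 1) N,
          div_self (by positivity), one_pow]
      have h1 : (N * d 0 / d 1) ^ i = (N / d 1) ^ i * (d 0 ^ (i - 1) * d 0) := by
        rw [← hsplit, ← mul_pow]
        congr 1
        ring
      have key : d i * (N * d 0 / d 1) ^ i ≤ (n.choose i : ℝ) * d 0 := by
        calc d i * (N * d 0 / d 1) ^ i
            = (d i * d 0 ^ (i - 1)) * (N / d 1) ^ i * d 0 := by rw [h1]; ring
          _ ≤ ((d 1 / N) ^ i * (n.choose i : ℝ)) * (N / d 1) ^ i * d 0 := by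
              apply mul_le_mul_of_nonneg_right
                (mul_le_mul_of_nonneg_right hwn (by positivity)) hd0.le
          _ = (n.choose i : ℝ) * ((d 1 / N) ^ i * (N / d 1) ^ i) * d 0 := by ring
          _ = (n.choose i : ℝ) * d 0 := by rw [hcancel, mul_one]
      calc d i * t0 ^ i
          = (d i * (N * d 0 / d 1) ^ i) * (1 / (N - 1)) ^ i := by
            rw [ht0x, mul_pow]; ring
        _ ≤ ((n.choose i : ℝ) * d 0) * (1 / (N - 1)) ^ i :=
            mul_le_mul_of_nonneg_right key (by positivity)
        _ = (1 / (N - 1)) ^ i * (n.choose i : ℝ) * d 0 := by ring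
  have hsum : ∑ i ∈ Finset.range (n + 1), d i * t0 ^ i
      ≤ (1 / (N - 1) + 1) ^ n * d 0 := by
    calc ∑ i ∈ Finset.range (n + 1), d i * t0 ^ i
        ≤ ∑ i ∈ Finset.range (n + 1),
            (1 / (N - 1)) ^ i * 1 ^ (n - i) * (n.choose i : ℝ) * d 0 :=
          Finset.sum_le_sum hterm
      _ = (∑ i ∈ Finset.range (n + 1),
            (1 / (N - 1)) ^ i * 1 ^ (n - i) * (n.choose i : ℝ)) * d 0 := by
          rw [Finset.sum_mul]
      _ = (1 / (N - 1) + 1) ^ n * d 0 := by rw [add_pow]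
  have hmain := le_trans (hR t0 ht0pos.le) hsum
  have hfrac : 1 / (N - 1) + 1 = N / (N - 1) := by field_simp; ring
  rw [hfrac] at hmain
  obtain ⟨k, hk⟩ : ∃ k, n = k + 1 := ⟨n - 1, by omega⟩
  have hk1 : n - 1 = k := by omega
  rw [hk1, div_pow]
  rw [hk, pow_succ, div_pow] at hmain
  rw [ht0def] at hmain
  -- hmain : C * (N * d 0 / ((N-1) * d 1)) ≤ N^k/(N-1)^k * (N/(N-1)) * d 0
  have hNk : (0:ℝ) < N ^ k := pow_pos hnpos _
  have hmk : (0:ℝ) < (N - 1) ^ k := pow_pos hm _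
  have hL : C * (N * d 0 / ((N - 1) * d 1)) = (C * N * d 0) / ((N - 1) * d 1) := by
    ring
  have hRr : N ^ k / (N - 1) ^ k * (N / (N - 1)) * d 0
      = (N ^ k * N * d 0) / ((N - 1) ^ k * (N - 1)) := by
    rw [div_mul_div_comm, div_mul_eq_mul_div]
  rw [hL, hRr, div_le_div_iff₀ (by positivity) (by positivity)] at hmain
  have h2 : (C * (N - 1) ^ k) * (N * d 0 * (N - 1))
      ≤ (d 1 * N ^ k) * (N * d 0 * (N - 1)) := by linear_combination hmain
  have hg : C * (N - 1) ^ k ≤ d 1 * N ^ k :=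
    le_of_mul_le_mul_right h2 (by positivity)
  calc C * ((N - 1) ^ k / N ^ k) = (C * (N - 1) ^ k) / N ^ k := by ring
    _ ≤ d 1 := by rw [div_le_iff₀ hNk]; linarith
end
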